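/- arXiv:1101.4178 — 5 statements merged into one kernel-verified Lean document; each statement's English description precedes it below -/
import Mathlib

section
/- Let {Λ_i}_{i∈ℕ} be a countable system of closed cones in ℝⁿ that is extremal at the origin (there exists a bounded sequence {a_i} ⊂ ℝⁿ with ⋂_{i=1}^∞ (Λ_i − a_i) = ∅) and satisfies the nonoverlapping condition ⋂_{i=1}^∞ Λ_i = {0}. Then there exist points w_i ∈ Λ_i and vectors x*_i ∈ N̂(w_i; Λ_i) ⊆ N(0; Λ_i) for i ∈ ℕ such that Σ_{i=1}^∞ 2^{-i} x*_i = 0 and Σ_{i=1}^∞ 2^{-i} ‖x*_i‖² = 1. -/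
open Filter Topology

variable {E : Type*} [NormedAddCommGroup E] [InnerProductSpace ℝ E]

/-- `Λ` is a cone: closed under multiplication by nonnegative scalars. -/
def IsConeSet (Λ : Set E) : Prop := ∀ t : ℝ, 0 ≤ t → ∀ v ∈ Λ, t • v ∈ Λ

/-- The translate `S - a = {x | x + a ∈ S}`. -/
def Set.translate (S : Set E) (a : E) : Set E := {x | x + a ∈ S}

/-- `v` is a Fréchet `ε`-normal to `Ω` at `x₀` (normals identified with vectors
via the inner product). -/
def IsEpsNormal (ε : ℝ) (v : E) (Ω : Set E) (x₀ : E) : Prop :=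
  ∀ η > 0, ∃ δ > 0, ∀ x ∈ Ω, ‖x - x₀‖ < δ → (inner ℝ v (x - x₀) : ℝ) ≤ (ε + η) * ‖x - x₀‖

/-- The Fréchet (regular) normal cone to `Ω` at `x₀`. -/
def frechetNormalCone (Ω : Set E) (x₀ : E) : Set E := {v | IsEpsNormal 0 v Ω x₀}

/-- The Mordukhovich limiting normal cone to `Ω` at `x₀`: limits of Fréchet
`ε_k`-normals at points `x_k → x₀` of `Ω` with `ε_k ↓ 0`. -/
def limitingNormalCone (Ω : Set E) (x₀ : E) : Set E :=
  {v | ∃ (ε : ℕ → ℝ) (x : ℕ → E) (w : ℕ → E),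
    (∀ k, 0 ≤ ε k) ∧ Tendsto ε atTop (𝓝 0) ∧
    (∀ k, x k ∈ Ω) ∧ Tendsto x atTop (𝓝 x₀) ∧
    Tendsto w atTop (𝓝 v) ∧ (∀ k, IsEpsNormal (ε k) (w k) Ω (x k))}


/-!
Minimize `f x = ∑ 2^{-(i+1)} d(x + aᵢ, Λᵢ)²`. Since the cones only meet at `0`, the
homogeneous function `u ↦ ∑ 2^{-(i+1)} d(u, Λᵢ)²` is bounded below by `c ‖u‖²` with `c > 0`
(minimize it on the unit sphere), so `f` is coercive and attains its minimum at some `x₀`;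
extremality makes `f x₀ > 0`. If `pᵢ` is a nearest point of `Λᵢ` to `x₀ + aᵢ`, then
`vᵢ = x₀ + aᵢ - pᵢ` is a Fréchet normal to `Λᵢ` at `pᵢ`, and `d(x₀ + h + aᵢ, Λᵢ) ≤ ‖vᵢ + h‖`
gives `f (x₀ + h) ≤ f x₀ + 2 ⟪h, V⟫ + ‖h‖²` with `V = ∑ 2^{-(i+1)} vᵢ`; minimality at `h = -V`
forces `V = 0`. Rescaling by `(f x₀)^{-1/2}` normalizes, and Fréchet normals at `pᵢ` are also
Fréchet normals at every `t • pᵢ`, hence limiting normals at `0`.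
-/

open Metric Pointwise

noncomputable def dyadicWeight (i : ℕ) : ℝ := 1 / 2 ^ (i + 1)

lemma dyadicWeight_pos (i : ℕ) : 0 < dyadicWeight i := by
  unfold dyadicWeight; positivity

lemma hasSum_dyadicWeight : HasSum dyadicWeight 1 :=
  (hasSum_geometric_two' 1).congr_fun fun i => by
    rw [dyadicWeight, pow_succ]; ring

lemma summable_dyadicWeight_mul_sq {φ : ℕ → ℝ} {C : ℝ} (hφ : ∀ i, |φ i| ≤ C) :
    Summable fun i => dyadicWeight i * φ i ^ 2 := by
  refine (hasSum_dyadicWeight.summable.mul_right (C ^ 2)).of_nonneg_of_le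
    (fun i => mul_nonneg (dyadicWeight_pos i).le (sq_nonneg _)) fun i => ?_
  exact mul_le_mul_of_nonneg_left (sq_le_sq' (abs_le.1 (hφ i)).1 (abs_le.1 (hφ i)).2)
    (dyadicWeight_pos i).le

section NormalCones

variable {Λ : Set E} {p v : E}

lemma sub_mem_frechetNormalCone_of_infDist_eq {z : E} (hp : infDist z Λ = dist z p) :
    z - p ∈ frechetNormalCone Λ p := by
  intro η hη
  refine ⟨2 * η, by positivity, fun x hx hxp => ?_⟩
  have hnear : ‖z - p‖ ≤ ‖(z - p) - (x - p)‖ := by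
    rw [sub_sub_sub_cancel_right, ← dist_eq_norm, ← dist_eq_norm, ← hp]
    exact infDist_le_dist_of_mem hx
  have hsq := pow_le_pow_left₀ (norm_nonneg _) hnear 2
  rw [norm_sub_sq_real (z - p)] at hsq
  nlinarith [mul_nonneg (norm_nonneg (x - p)) (sub_nonneg.2 hxp.le)]

lemma smul_mem_frechetNormalCone {t : ℝ} (ht : 0 < t) (hv : v ∈ frechetNormalCone Λ p) :
    t • v ∈ frechetNormalCone Λ p := by
  intro η hη
  obtain ⟨δ, hδ, hnormal⟩ := hv (η / t) (by positivity)
  refine ⟨δ, hδ, fun x hx hxp => ?_⟩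
  calc inner ℝ (t • v) (x - p) = t * inner ℝ v (x - p) := real_inner_smul_left _ _ _
    _ ≤ t * ((0 + η / t) * ‖x - p‖) := mul_le_mul_of_nonneg_left (hnormal x hx hxp) ht.le
    _ = (0 + η) * ‖x - p‖ := by field_simp; ring

lemma IsConeSet.smul_set_eq (hΛ : IsConeSet Λ) {t : ℝ} (ht : 0 < t) : t • Λ = Λ :=
  (Set.smul_set_subset_iff.2 fun x hx => hΛ t ht.le x hx).antisymm fun x hx =>
    ⟨t⁻¹ • x, hΛ _ (inv_nonneg.2 ht.le) x hx, smul_inv_smul₀ ht.ne' x⟩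

lemma IsConeSet.mem_frechetNormalCone_smul (hΛ : IsConeSet Λ) {t : ℝ} (ht : 0 < t)
    (hv : v ∈ frechetNormalCone Λ p) : v ∈ frechetNormalCone Λ (t • p) := by
  intro η hη
  obtain ⟨δ, hδ, hnormal⟩ := hv η hη
  refine ⟨t * δ, by positivity, fun x hx hxp => ?_⟩
  rw [← hΛ.smul_set_eq ht] at hx
  obtain ⟨y, hy, rfl⟩ := hx
  rw [← smul_sub, norm_smul, Real.norm_of_nonneg ht.le] at hxp ⊢
  rw [real_inner_smul_right]
  calc t * inner ℝ v (y - p) ≤ t * ((0 + η) * ‖y - p‖) :=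
        mul_le_mul_of_nonneg_left (hnormal y hy (lt_of_mul_lt_mul_left hxp ht.le)) ht.le
    _ = (0 + η) * (t * ‖y - p‖) := by ring

lemma IsConeSet.frechetNormalCone_subset_limitingNormalCone (hΛ : IsConeSet Λ) (hp : p ∈ Λ) :
    frechetNormalCone Λ p ⊆ limitingNormalCone Λ 0 := by
  intro v hv
  have hray : Tendsto (fun k : ℕ => (1 / ((k : ℝ) + 1)) • p) atTop (𝓝 0) := by
    simpa using (tendsto_one_div_add_atTop_nhds_zero_nat (𝕜 := ℝ)).smul_const p
  exact ⟨fun _ => 0, fun k => (1 / ((k : ℝ) + 1)) • p, fun _ => v, fun _ => le_rfl,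
    tendsto_const_nhds, fun k => hΛ _ (by positivity) p hp, hray, tendsto_const_nhds,
    fun k => hΛ.mem_frechetNormalCone_smul (by positivity) hv⟩

end NormalCones

lemma IsConeSet.infDist_smul {Λ : Set E} (hΛ : IsConeSet Λ) {t : ℝ} (ht : 0 < t) (u : E) :
    infDist (t • u) Λ = t * infDist u Λ := by
  conv_lhs => rw [← hΛ.smul_set_eq ht]
  rw [infDist_smul₀ ht.ne', Real.norm_of_nonneg ht.le]

lemma infDist_le_norm {F : Type*} [SeminormedAddCommGroup F] {s : Set F} (h0 : (0 : F) ∈ s)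
    (x : F) : infDist x s ≤ ‖x‖ := by
  simpa using infDist_le_dist_of_mem (x := x) h0

noncomputable def distSqSum {X : Type*} [PseudoMetricSpace X] (Λ : ℕ → Set X) (y : ℕ → X) : ℝ :=
  ∑' i, dyadicWeight i * infDist (y i) (Λ i) ^ 2

section DistSqSum

variable {F : Type*} [NormedAddCommGroup F] {Λ : ℕ → Set F}

lemma summable_dyadicWeight_mul_infDist_sq (h0 : ∀ i, (0 : F) ∈ Λ i) {y : ℕ → F} {C : ℝ}
    (hy : ∀ i, ‖y i‖ ≤ C) : Summable fun i => dyadicWeight i * infDist (y i) (Λ i) ^ 2 :=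
  summable_dyadicWeight_mul_sq fun i => by
    rw [abs_of_nonneg infDist_nonneg]
    exact (infDist_le_norm (h0 i) _).trans (hy i)

lemma distSqSum_nonneg (y : ℕ → F) : 0 ≤ distSqSum Λ y :=
  tsum_nonneg fun i => mul_nonneg (dyadicWeight_pos i).le (sq_nonneg _)

lemma distSqSum_pos (hclosed : ∀ i, IsClosed (Λ i)) (h0 : ∀ i, (0 : F) ∈ Λ i) {y : ℕ → F}
    {C : ℝ} (hy : ∀ i, ‖y i‖ ≤ C) {i : ℕ} (hi : y i ∉ Λ i) : 0 < distSqSum Λ y := by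
  have hdist := ((hclosed i).notMem_iff_infDist_pos ⟨0, h0 i⟩).1 hi
  exact (summable_dyadicWeight_mul_infDist_sq h0 hy).tsum_pos
    (fun j => mul_nonneg (dyadicWeight_pos j).le (sq_nonneg _)) i
    (mul_pos (dyadicWeight_pos i) (pow_pos hdist 2))

lemma distSqSum_le_two_mul_distSqSum_add (h0 : ∀ i, (0 : F) ∈ Λ i) {y z : ℕ → F} {C M : ℝ}
    (hy : ∀ i, ‖y i‖ ≤ C) (hyz : ∀ i, dist (y i) (z i) ≤ M) :
    distSqSum Λ y ≤ 2 * distSqSum Λ z + 2 * M ^ 2 := by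
  have hz : ∀ i, ‖z i‖ ≤ C + M := fun i =>
    (norm_le_norm_add_const_of_dist_le ((dist_comm _ _).trans_le (hyz i))).trans
      (add_le_add (hy i) le_rfl)
  have hM : HasSum (fun i => dyadicWeight i * M ^ 2) (M ^ 2) := by
    simpa using hasSum_dyadicWeight.mul_right (M ^ 2)
  refine hasSum_le (fun i => ?_) (summable_dyadicWeight_mul_infDist_sq h0 hy).hasSum
    (((summable_dyadicWeight_mul_infDist_sq h0 hz).hasSum.mul_left 2).add
      (hM.mul_left 2))
  have hle : infDist (y i) (Λ i) ≤ infDist (z i) (Λ i) + M :=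
    infDist_le_infDist_add_dist.trans (add_le_add le_rfl (hyz i))
  have hsq : infDist (y i) (Λ i) ^ 2 ≤ 2 * infDist (z i) (Λ i) ^ 2 + 2 * M ^ 2 := by
    nlinarith [infDist_nonneg (x := y i) (s := Λ i), sq_nonneg (infDist (z i) (Λ i) - M)]
  nlinarith [dyadicWeight_pos i]

lemma continuous_distSqSum_add (h0 : ∀ i, (0 : F) ∈ Λ i) {a : ℕ → F} {M : ℝ}
    (ha : ∀ i, ‖a i‖ ≤ M) : Continuous fun x => distSqSum Λ fun i => x + a i := by
  refine continuous_iff_continuousAt.2 fun x₀ =>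
    ContinuousOn.continuousAt ?_ (closedBall_mem_nhds x₀ one_pos)
  refine continuousOn_tsum (fun i => (((continuous_infDist_pt _).comp
      (continuous_add_const (a i))).pow 2).const_mul _ |>.continuousOn)
    (hasSum_dyadicWeight.summable.mul_right ((‖x₀‖ + 1 + M) ^ 2)) fun i x hx => ?_
  have hdist : infDist (x + a i) (Λ i) ≤ ‖x₀‖ + 1 + M :=
    calc infDist (x + a i) (Λ i) ≤ ‖x + a i‖ := infDist_le_norm (h0 i) _
      _ ≤ ‖x‖ + ‖a i‖ := norm_add_le _ _
      _ ≤ ‖x₀‖ + 1 + M := add_le_add (norm_le_norm_add_const_of_dist_le hx) (ha i)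
  rw [Real.norm_of_nonneg (mul_nonneg (dyadicWeight_pos i).le (sq_nonneg _))]
  exact mul_le_mul_of_nonneg_left (pow_le_pow_left₀ infDist_nonneg hdist 2)
    (dyadicWeight_pos i).le

lemma hasSum_dyadicWeight_mul_norm_sub_sq (h0 : ∀ i, (0 : F) ∈ Λ i) {y p : ℕ → F} {C : ℝ}
    (hy : ∀ i, ‖y i‖ ≤ C) (hproj : ∀ i, infDist (y i) (Λ i) = dist (y i) (p i)) :
    HasSum (fun i => dyadicWeight i * ‖y i - p i‖ ^ 2) (distSqSum Λ y) :=
  (summable_dyadicWeight_mul_infDist_sq h0 hy).hasSum.congr_fun fun i => by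
    rw [hproj, dist_eq_norm]

lemma summable_dyadicWeight_smul_sub [NormedSpace ℝ F] [CompleteSpace F]
    (h0 : ∀ i, (0 : F) ∈ Λ i) {y p : ℕ → F} {C : ℝ} (hy : ∀ i, ‖y i‖ ≤ C)
    (hproj : ∀ i, infDist (y i) (Λ i) = dist (y i) (p i)) :
    Summable fun i => dyadicWeight i • (y i - p i) :=
  (hasSum_dyadicWeight.summable.mul_right C).of_norm_bounded fun i => by
    rw [norm_smul, Real.norm_of_nonneg (dyadicWeight_pos i).le, ← dist_eq_norm, ← hproj]
    exact mul_le_mul_of_nonneg_left ((infDist_le_norm (h0 i) _).trans (hy i))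
      (dyadicWeight_pos i).le

end DistSqSum

section ConeDistSqSum

variable {Λ : ℕ → Set E}

lemma distSqSum_const_smul (hcone : ∀ i, IsConeSet (Λ i)) {t : ℝ} (ht : 0 < t) (u : E) :
    (distSqSum Λ fun _ => t • u) = t ^ 2 * distSqSum Λ fun _ => u := by
  simp only [distSqSum, (hcone _).infDist_smul ht, ← tsum_mul_left]
  exact tsum_congr fun i => by ring

lemma exists_pos_mul_norm_sq_le_distSqSum [ProperSpace E] (hcone : ∀ i, IsConeSet (Λ i))
    (hclosed : ∀ i, IsClosed (Λ i)) (h0 : ∀ i, (0 : E) ∈ Λ i) (hnonover : ⋂ i, Λ i = {0}) :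
    ∃ c > 0, ∀ u : E, c * ‖u‖ ^ 2 ≤ distSqSum Λ fun _ => u := by
  rcases subsingleton_or_nontrivial E with hE | hE
  · exact ⟨1, one_pos, fun u => by simpa [Subsingleton.elim u 0] using distSqSum_nonneg _⟩
  have hcont : Continuous fun u : E => distSqSum Λ fun _ => u := by
    simpa using continuous_distSqSum_add h0 (a := 0) (M := 0) (by simp)
  obtain ⟨u₀, hu₀, hmin⟩ := (isCompact_sphere (0 : E) 1).exists_isMinOn
    (NormedSpace.sphere_nonempty.2 zero_le_one) hcont.continuousOn
  rw [mem_sphere_zero_iff_norm] at hu₀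
  have hout : ∃ i, u₀ ∉ Λ i := by
    by_contra! hin
    have hzero := Set.mem_iInter.2 hin
    rw [hnonover, Set.mem_singleton_iff] at hzero
    simp [hzero] at hu₀
  obtain ⟨i, hi⟩ := hout
  refine ⟨_, distSqSum_pos hclosed h0 (fun _ => hu₀.le) hi, fun u => ?_⟩
  rcases eq_or_ne u 0 with rfl | hu
  · simpa using distSqSum_nonneg _
  have hpos : 0 < ‖u‖ := norm_pos_iff.2 hu
  have hunit : ‖u‖⁻¹ • u ∈ sphere (0 : E) 1 := by simp [norm_smul, hpos.ne']
  calc _ ≤ ‖u‖ ^ 2 * distSqSum Λ (fun _ => ‖u‖⁻¹ • u) := by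
        rw [mul_comm]; exact mul_le_mul_of_nonneg_left (hmin hunit) (sq_nonneg _)
    _ = distSqSum Λ fun _ => u := by
        rw [← distSqSum_const_smul hcone hpos, smul_inv_smul₀ hpos.ne']

lemma tendsto_distSqSum_add_cocompact [ProperSpace E] (hcone : ∀ i, IsConeSet (Λ i))
    (hclosed : ∀ i, IsClosed (Λ i)) (h0 : ∀ i, (0 : E) ∈ Λ i) (hnonover : ⋂ i, Λ i = {0})
    {a : ℕ → E} {M : ℝ} (ha : ∀ i, ‖a i‖ ≤ M) :
    Tendsto (fun x => distSqSum Λ fun i => x + a i) (cocompact E) atTop := by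
  obtain ⟨c, hc, hlower⟩ := exists_pos_mul_norm_sq_le_distSqSum hcone hclosed h0 hnonover
  have hgrowth : Tendsto (fun x : E => c / 2 * ‖x‖ ^ 2 - M ^ 2) (cocompact E) atTop :=
    tendsto_atTop_add_const_right _ _ (((tendsto_pow_atTop two_ne_zero).comp
      tendsto_norm_cocompact_atTop).const_mul_atTop (by positivity))
  refine tendsto_atTop_mono (fun x => ?_) hgrowth
  have := distSqSum_le_two_mul_distSqSum_add h0 (Λ := Λ) (y := fun _ => x)
    (z := fun i => x + a i) (fun _ => le_rfl) fun i => by simpa using ha i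
  linarith [hlower x]

end ConeDistSqSum

section Stationarity

variable [CompleteSpace E] {Λ : ℕ → Set E} {y p : ℕ → E} {C : ℝ}

lemma distSqSum_add_le (h0 : ∀ i, (0 : E) ∈ Λ i) (hy : ∀ i, ‖y i‖ ≤ C) (hp : ∀ i, p i ∈ Λ i)
    (hproj : ∀ i, infDist (y i) (Λ i) = dist (y i) (p i)) (h : E) :
    (distSqSum Λ fun i => y i + h) ≤
      distSqSum Λ y + 2 * inner ℝ h (∑' i, dyadicWeight i • (y i - p i)) + ‖h‖ ^ 2 := by
  have hinner : HasSum (fun i => dyadicWeight i * inner ℝ h (y i - p i))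
      (inner ℝ h (∑' i, dyadicWeight i • (y i - p i))) := by
    simpa [real_inner_smul_right] using
      (summable_dyadicWeight_smul_sub h0 hy hproj).hasSum.mapL (innerSL ℝ h)
  have hconst : HasSum (fun i => dyadicWeight i * ‖h‖ ^ 2) (‖h‖ ^ 2) := by
    simpa using hasSum_dyadicWeight.mul_right (‖h‖ ^ 2)
  have hy' : ∀ i, ‖y i + h‖ ≤ C + ‖h‖ := fun i => (norm_add_le _ _).trans (add_le_add (hy i) le_rfl)
  refine hasSum_le (fun i => ?_) (summable_dyadicWeight_mul_infDist_sq h0 hy').hasSum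
    (((hasSum_dyadicWeight_mul_norm_sub_sq h0 hy hproj).add (hinner.mul_left 2)).add hconst)
  have hle : infDist (y i + h) (Λ i) ≤ ‖(y i - p i) + h‖ := by
    rw [sub_add_eq_add_sub, ← dist_eq_norm]
    exact infDist_le_dist_of_mem (hp i)
  have hsq := pow_le_pow_left₀ infDist_nonneg hle 2
  rw [norm_add_sq_real, real_inner_comm] at hsq
  have := mul_le_mul_of_nonneg_left hsq (dyadicWeight_pos i).le
  linarith

lemma hasSum_dyadicWeight_smul_sub_eq_zero (h0 : ∀ i, (0 : E) ∈ Λ i) (hy : ∀ i, ‖y i‖ ≤ C)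
    (hp : ∀ i, p i ∈ Λ i) (hproj : ∀ i, infDist (y i) (Λ i) = dist (y i) (p i))
    (hmin : ∀ h : E, distSqSum Λ y ≤ distSqSum Λ fun i => y i + h) :
    HasSum (fun i => dyadicWeight i • (y i - p i)) 0 := by
  set V := ∑' i, dyadicWeight i • (y i - p i)
  suffices V = 0 from this ▸ (summable_dyadicWeight_smul_sub h0 hy hproj).hasSum
  have hdescent := (hmin (-V)).trans (distSqSum_add_le h0 hy hp hproj (-V))
  rw [inner_neg_left, real_inner_self_eq_norm_sq, norm_neg] at hdescent
  exact norm_eq_zero.1 (by nlinarith [norm_nonneg V])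

end Stationarity

lemma hasSum_mul_norm_inv_sqrt_smul_sq {F : Type*} [NormedAddCommGroup F] [NormedSpace ℝ F]
    {μ : ℕ → ℝ} {v : ℕ → F} {c : ℝ} (hc : 0 < c) (h : HasSum (fun i => μ i * ‖v i‖ ^ 2) c) :
    HasSum (fun i => μ i * ‖(√c)⁻¹ • v i‖ ^ 2) 1 := by
  have hscaled := h.mul_left c⁻¹
  rw [inv_mul_cancel₀ hc.ne'] at hscaled
  refine hscaled.congr_fun fun i => ?_
  rw [norm_smul, mul_pow, norm_inv, Real.norm_of_nonneg (Real.sqrt_nonneg c), inv_pow,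
    Real.sq_sqrt hc.le]
  ring

/-- conic extremal principle in finite dimensions. -/
theorem conic_extremal_principle (n : ℕ) (Λ : ℕ → Set (EuclideanSpace ℝ (Fin n)))
    (hcone : ∀ i, IsConeSet (Λ i)) (hclosed : ∀ i, IsClosed (Λ i))
    (h0 : ∀ i, (0 : EuclideanSpace ℝ (Fin n)) ∈ Λ i)
    (hext : ∃ a : ℕ → EuclideanSpace ℝ (Fin n), (∃ M : ℝ, ∀ i, ‖a i‖ ≤ M) ∧
      ⋂ i, (Λ i).translate (a i) = ∅)
    (hnonover : ⋂ i, Λ i = {0}) :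
    ∃ (w x : ℕ → EuclideanSpace ℝ (Fin n)),
      (∀ i, w i ∈ Λ i) ∧
      (∀ i, x i ∈ frechetNormalCone (Λ i) (w i)) ∧
      (∀ i, x i ∈ limitingNormalCone (Λ i) 0) ∧
      HasSum (fun i => (1 / 2 ^ (i + 1) : ℝ) • x i) 0 ∧
      HasSum (fun i => (1 / 2 ^ (i + 1) : ℝ) * ‖x i‖ ^ 2) 1 := by
  obtain ⟨a, ⟨M, hM⟩, hempty⟩ := hext
  obtain ⟨x₀, hmin⟩ := (continuous_distSqSum_add h0 hM).exists_forall_le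
    (tendsto_distSqSum_add_cocompact hcone hclosed h0 hnonover hM)
  choose p hp hproj using fun i => (hclosed i).exists_infDist_eq_dist ⟨0, h0 i⟩ (x₀ + a i)
  have hy : ∀ i, ‖x₀ + a i‖ ≤ ‖x₀‖ + M := fun i =>
    (norm_add_le _ _).trans (add_le_add le_rfl (hM i))
  obtain ⟨i, hi⟩ : ∃ i, x₀ + a i ∉ Λ i := by
    by_contra! hin
    exact (hempty ▸ Set.mem_iInter.2 hin : x₀ ∈ (∅ : Set _))
  have hpos := distSqSum_pos hclosed h0 hy hi
  have hstat := hasSum_dyadicWeight_smul_sub_eq_zero h0 hy hp hproj fun h => by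
    simpa only [add_right_comm x₀ h] using hmin (x₀ + h)
  set c := distSqSum Λ fun i => x₀ + a i
  have hnormal i : (√c)⁻¹ • (x₀ + a i - p i) ∈ frechetNormalCone (Λ i) (p i) :=
    smul_mem_frechetNormalCone (by positivity) (sub_mem_frechetNormalCone_of_infDist_eq (hproj i))
  refine ⟨p, _, hp, hnormal,
    fun i => (hcone i).frechetNormalCone_subset_limitingNormalCone (hp i) (hnormal i), ?_,
    hasSum_mul_norm_inv_sqrt_smul_sq hpos (hasSum_dyadicWeight_mul_norm_sub_sq h0 hy hproj)⟩
  have hscaled := hstat.const_smul (√c)⁻¹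
  rw [smul_zero] at hscaled
  exact hscaled.congr_fun fun i => smul_comm _ _ _
end

section
/- Let X be a Hilbert space with orthonormal basis {e_i}_{i∈ℕ} and define closed half-spaces Λ₁ := {x : ⟨x,e₁⟩ ≤ 0} and Λ_i := {x : ⟨x, e_i − e_{i−1}⟩ ≤ 0} for i ≥ 2. Then ⋂_{i=1}^∞ Λ_i = {0} and (Λ₁ − e₁) ∩ ⋂_{i≥2} Λ_i = ∅, yet there exist no normals x*_i ∈ N(0;Λ_i) with Σ_{i=1}^∞ x*_i = 0 and Σ_{i=1}^∞ ‖x*_i‖ > 0. -/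
open Filter Topology

variable {X : Type*} [NormedAddCommGroup X] [InnerProductSpace ℝ X]

/-- The normal cone at the origin to a convex set `Λ` containing `0`
(the polar cone, identified with vectors via the inner product). -/
def polarNormalCone (Λ : Set X) : Set X := {v | ∀ u ∈ Λ, (inner ℝ v u : ℝ) ≤ 0}

/-!
For `x` in every `Λ (i + 1)` the coefficients `⟪x, e n⟫` are nonincreasing in `n`, and they tend
to `0` by Bessel's inequality, so they are all nonnegative; with `⟪x, e 0⟫ ≤ 0`, resp. `≤ -1`,
this gives the first two claims. A normal to `Λ i` is a multiple `c i • v i` of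
`v i = e i - e (i - 1)`. Pairing `∑ c i • v i = 0` with `e n` gives `c n = c (n + 1)`, while
`c n = ⟪e n, c n • v n⟫ → 0` because the terms of a convergent series tend to `0`; so all `c i`
vanish.
-/

theorem polarNormalCone_subset_orthogonal {Λ : Set X} {K : Submodule ℝ X} (hK : (K : Set X) ⊆ Λ) :
    polarNormalCone Λ ⊆ Kᗮ := fun w hw => (K.mem_orthogonal' w).2 fun u hu =>
  le_antisymm (hw u (hK hu)) (by simpa [inner_neg_right] using hw (-u) (hK (K.neg_mem hu)))

theorem polarNormalCone_halfSpace_subset_span (v : X) :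
    polarNormalCone {x : X | inner ℝ x v ≤ 0} ⊆ ℝ ∙ v := by
  rw [← (ℝ ∙ v).orthogonal_orthogonal]
  refine polarNormalCone_subset_orthogonal fun u hu => ?_
  simp [Submodule.mem_orthogonal_singleton_iff_inner_left.1 hu]

theorem eq_zero_of_forall_inner_eq_zero {ι : Type*} {e : ι → X}
    (hbasis : (Submodule.span ℝ (Set.range e)).topologicalClosure = ⊤) {x : X}
    (hx : ∀ n, inner ℝ (e n) x = 0) : x = 0 := by
  have hperp : Submodule.span ℝ (Set.range e) ⟂ ℝ ∙ x :=
    Submodule.isOrtho_span.2 (by rintro _ ⟨n, rfl⟩ _ rfl; exact hx n)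
  have := Submodule.isOrtho_iff_le.1 hperp.symm
  rw [← Submodule.orthogonal_closure, hbasis, Submodule.top_orthogonal_eq_bot] at this
  simpa using this (Submodule.mem_span_singleton_self x)

theorem Orthonormal.tendsto_inner_atTop_zero {e : ℕ → X} (he : Orthonormal ℝ e) (x : X) :
    Tendsto (fun n => inner ℝ x (e n)) atTop (𝓝 0) := by
  have := (he.inner_products_summable (x := x)).tendsto_atTop_zero.sqrt
  simp only [Real.sqrt_zero, Real.sqrt_sq (norm_nonneg _)] at this
  simpa [real_inner_comm] using tendsto_zero_iff_norm_tendsto_zero.2 this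

def backwardDiff (e : ℕ → X) : ℕ → X
  | 0 => e 0
  | k + 1 => e (k + 1) - e k

theorem antitone_inner_of_inner_sub_nonpos {e : ℕ → X} {x : X}
    (h : ∀ k, inner ℝ x (e (k + 1) - e k) ≤ 0) : Antitone fun n => inner ℝ x (e n) :=
  antitone_nat_of_succ_le fun k => by simpa [inner_sub_right] using h k

theorem Orthonormal.inner_nonneg_of_inner_sub_nonpos {e : ℕ → X} (he : Orthonormal ℝ e) {x : X}
    (h : ∀ k, inner ℝ x (e (k + 1) - e k) ≤ 0) (n : ℕ) : 0 ≤ inner ℝ x (e n) :=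
  (antitone_inner_of_inner_sub_nonpos h).le_of_tendsto (he.tendsto_inner_atTop_zero x) n

theorem Orthonormal.inner_backwardDiff {e : ℕ → X} (he : Orthonormal ℝ e) (n i : ℕ) :
    inner ℝ (e n) (backwardDiff e i) = (if i = n then 1 else 0) - if i = n + 1 then 1 else 0 := by
  have hee := orthonormal_iff_ite.1 he
  cases i with
  | zero => simp [backwardDiff, hee, eq_comm]
  | succ k =>
    simp only [backwardDiff, inner_sub_right, hee]
    by_cases h : n = k <;> simp [h, eq_comm]

theorem Orthonormal.tendsto_inner_of_tendsto_zero {ι : Type*} {l : Filter ι} {e : ι → X}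
    (he : Orthonormal ℝ e) {y : ι → X} (hy : Tendsto y l (𝓝 0)) :
    Tendsto (fun i => inner ℝ (e i) (y i)) l (𝓝 0) :=
  squeeze_zero_norm (fun n => (norm_inner_le_norm _ _).trans_eq (by rw [he.1 n, one_mul]))
    (tendsto_zero_iff_norm_tendsto_zero.1 hy)

theorem Orthonormal.eq_zero_of_hasSum_smul_backwardDiff {e : ℕ → X} (he : Orthonormal ℝ e)
    {c : ℕ → ℝ} (hsum : HasSum (fun i => c i • backwardDiff e i) 0) (i : ℕ) : c i = 0 := by
  have hstep : ∀ n, c (n + 1) = c n := fun n => by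
    have h1 : HasSum (fun i => c i * inner ℝ (e n) (backwardDiff e i)) 0 := by
      simpa only [innerSL_apply_apply, inner_smul_right, map_zero] using
        (innerSL ℝ (e n)).hasSum hsum
    have h2 : HasSum (fun i => c i * inner ℝ (e n) (backwardDiff e i)) (c n - c (n + 1)) := by
      refine ((hasSum_ite_eq n (c n)).sub (hasSum_ite_eq (n + 1) (c (n + 1)))).congr_fun
        fun i => ?_
      rw [he.inner_backwardDiff]
      split_ifs <;> simp_all
    linarith [h1.unique h2]
  have hconst : ∀ n, c n = c 0 := fun n => by
    induction n with
    | zero => rfl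
    | succ k ih => rw [hstep, ih]
  have hlim : Tendsto (fun n => inner ℝ (e n) (c n • backwardDiff e n)) atTop (𝓝 0) :=
    he.tendsto_inner_of_tendsto_zero hsum.summable.tendsto_atTop_zero
  simp only [inner_smul_right, he.inner_backwardDiff, if_true, Nat.ne_add_one, if_false, sub_zero,
    mul_one, hconst] at hlim
  rw [hconst, tendsto_const_nhds_iff.1 hlim]

theorem conic_extremal_principle_fails_in_infinite_dimensions_general
    (e : ℕ → X) (he : Orthonormal ℝ e)
    (hbasis : (Submodule.span ℝ (Set.range e)).topologicalClosure = ⊤)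
    (Λ : ℕ → Set X)
    (hΛ : Λ 0 = {x | (inner ℝ x (e 0) : ℝ) ≤ 0} ∧
      ∀ k : ℕ, Λ (k + 1) = {x | (inner ℝ x (e (k + 1) - e k) : ℝ) ≤ 0}) :
    (⋂ i, Λ i) = {0} ∧
    ({x | x + e 0 ∈ Λ 0} ∩ ⋂ i : ℕ, Λ (i + 1)) = ∅ ∧
    ¬∃ x : ℕ → X, (∀ i, x i ∈ polarNormalCone (Λ i)) ∧
      HasSum x 0 ∧ 0 < ∑' i, ‖x i‖ := by
  obtain ⟨hΛ0, hΛsucc⟩ := hΛ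
  have hΛd : ∀ i, Λ i = {x | inner ℝ x (backwardDiff e i) ≤ 0}
    | 0 => hΛ0
    | k + 1 => hΛsucc k
  have hchain : ∀ x ∈ ⋂ i, Λ (i + 1), ∀ n,
      0 ≤ inner ℝ x (e n) ∧ inner ℝ x (e n) ≤ inner ℝ x (e 0) := fun x hx n => by
    have h : ∀ k, inner ℝ x (e (k + 1) - e k) ≤ 0 := by simpa [hΛsucc] using hx
    exact ⟨he.inner_nonneg_of_inner_sub_nonpos h n, antitone_inner_of_inner_sub_nonpos h n.zero_le⟩
  refine ⟨Set.Subset.antisymm (fun x hx => ?_) ?_, ?_, ?_⟩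
  · have hx0 : inner ℝ x (e 0) ≤ 0 := by simpa [hΛ0] using Set.mem_iInter.1 hx 0
    have hx' := hchain x (Set.mem_iInter.2 fun i => Set.mem_iInter.1 hx (i + 1))
    exact eq_zero_of_forall_inner_eq_zero hbasis fun n => by
      rw [real_inner_comm]; linarith [hx' n]
  · simp [hΛd]
  · refine Set.eq_empty_of_forall_notMem fun x ⟨hshift, hx⟩ => ?_
    have hx0 : inner ℝ x (e 0) + 1 ≤ 0 := by simpa [hΛ0, inner_add_left, he.1 0] using hshift
    linarith [(hchain x hx 0).1]
  · rintro ⟨x, hx, hsum, hpos⟩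
    choose c hc using fun i =>
      Submodule.mem_span_singleton.1 (polarNormalCone_halfSpace_subset_span _ (hΛd i ▸ hx i))
    have hc0 : ∀ i, c i = 0 :=
      he.eq_zero_of_hasSum_smul_backwardDiff (by simpa only [hc] using hsum)
    simp [← hc, hc0] at hpos

/-- failure of the conic extremal principle in infinite dimensions.
For the half-spaces `Λ₁ = {x : ⟪x,e₁⟫ ≤ 0}`, `Λ_i = {x : ⟪x, e_i - e_{i-1}⟫ ≤ 0}`
built from an orthonormal basis `e` of a Hilbert space, the nonoverlapping and
extremality conditions hold, yet no nontrivial normals sum to zero. -/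
theorem conic_extremal_principle_fails_in_infinite_dimensions
    [CompleteSpace X] (e : ℕ → X) (he : Orthonormal ℝ e)
    (hbasis : (Submodule.span ℝ (Set.range e)).topologicalClosure = ⊤)
    (Λ : ℕ → Set X)
    (hΛ : Λ 0 = {x | (inner ℝ x (e 0) : ℝ) ≤ 0} ∧
      ∀ k : ℕ, Λ (k + 1) = {x | (inner ℝ x (e (k + 1) - e k) : ℝ) ≤ 0}) :
    (⋂ i, Λ i) = {0} ∧
    ({x | x + e 0 ∈ Λ 0} ∩ ⋂ i : ℕ, Λ (i + 1)) = ∅ ∧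
    ¬∃ x : ℕ → X, (∀ i, x i ∈ polarNormalCone (Λ i)) ∧
      HasSum x 0 ∧ 0 < ∑' i, ‖x i‖ :=
  conic_extremal_principle_fails_in_infinite_dimensions_general e he hbasis Λ hΛ
end

section
/- Let {Λ_i}_{i∈ℕ} be closed cones in ℝⁿ satisfying the normal qualification condition, and let Λ := ⋂_{i=1}^∞ Λ_i. Then N̂(0;Λ) ⊆ cl { Σ_{i∈I} x*_i : x*_i ∈ N(0;Λ_i), I a finite subset of ℕ }. -/
open Filter Topology

variable {E : Type*} [NormedAddCommGroup E] [InnerProductSpace ℝ E]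

/-- The normal qualification condition for a countable system of cones. -/
def NormalQualification (n : ℕ) (Λ : ℕ → Set (EuclideanSpace ℝ (Fin n))) : Prop :=
  ∀ x : ℕ → EuclideanSpace ℝ (Fin n),
    (∀ i, x i ∈ limitingNormalCone (Λ i) 0) → HasSum x 0 → ∀ i, x i = 0

/-!
A Fréchet normal `v` to the intersection of the cones at `0` is nonpositive on it. Given `ε > 0`,
minimize `y ↦ (2σ)⁻¹ ∑_{i<k} d(y, Λ i)² + ‖y‖²/2 - ⟪v, y⟫` at some `z`, and let `p i` be a
nearest point of `Λ i` to `z`. Stationarity gives `v - z = ∑_{i<k} σ⁻¹ (z - p i)`, a sum of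
proximal normals, which are Fréchet normals at `p i` and hence, the `Λ i` being cones, limiting
normals at `0`. Comparing the value at `z` with the value `0` at the origin bounds `‖z‖` and the
distances `d(z, Λ i)`; by compactness, for large `k` and small `σ` this forces `z` to be close to
`⋂ Λ i`, where `v` is nonpositive, and then `‖z‖² ≤ 2⟪v, z⟫` is small.
-/

open Metric Finset
open scoped RealInnerProductSpace

section Normals

variable {Ω : Set E} {v w p q z : E} {ε : ℝ}

theorem IsConeSet.inner_le_mul_norm_of_isEpsNormal_zero (hΩ : IsConeSet Ω)
    (hv : IsEpsNormal ε v Ω 0) {x : E} (hx : x ∈ Ω) : ⟪v, x⟫ ≤ ε * ‖x‖ := by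
  have hη : ∀ η > 0, ⟪v, x⟫ ≤ (ε + η) * ‖x‖ := by
    intro η hη
    obtain ⟨δ, hδ, hnormal⟩ := hv η hη
    set t := δ / (‖x‖ + 1)
    have ht : 0 < t := by positivity
    have htx : ‖t • x - 0‖ < δ := by
      rw [sub_zero, norm_smul, Real.norm_of_nonneg ht.le, div_mul_eq_mul_div,
        div_lt_iff₀ (by positivity)]
      nlinarith [norm_nonneg x]
    have := hnormal _ (hΩ t ht.le x hx) htx
    rw [sub_zero, real_inner_smul_right, norm_smul, Real.norm_of_nonneg ht.le,
      mul_left_comm] at this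
    exact le_of_mul_le_mul_left this ht
  have hlim : Tendsto (fun η => (ε + η) * ‖x‖) (𝓝[>] 0) (𝓝 ((ε + 0) * ‖x‖)) :=
    tendsto_nhdsWithin_of_tendsto_nhds <|
      (by fun_prop : Continuous fun η => (ε + η) * ‖x‖).tendsto 0
  simpa using ge_of_tendsto hlim (eventually_nhdsWithin_of_forall hη)

theorem IsConeSet.iInter {ι : Sort*} {Λ : ι → Set E} (h : ∀ i, IsConeSet (Λ i)) :
    IsConeSet (⋂ i, Λ i) :=
  fun t ht x hx => Set.mem_iInter.2 fun i => h i t ht x (Set.mem_iInter.1 hx i)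

theorem IsEpsNormal.smul_of_isConeSet (h : IsEpsNormal ε w Ω p) (hΩ : IsConeSet Ω) {t : ℝ}
    (ht : 0 < t) : IsEpsNormal ε w Ω (t • p) := by
  intro η hη
  obtain ⟨δ, hδ, hnormal⟩ := h η hη
  refine ⟨t * δ, by positivity, fun x hx hxδ => ?_⟩
  have hdiff : x - t • p = t • (t⁻¹ • x - p) := by
    rw [smul_sub, smul_smul, mul_inv_cancel₀ ht.ne', one_smul]
  have hnorm : ‖x - t • p‖ = t * ‖t⁻¹ • x - p‖ := by
    rw [hdiff, norm_smul, Real.norm_of_nonneg ht.le]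
  rw [hnorm] at hxδ ⊢
  have := hnormal _ (hΩ _ (inv_nonneg.2 ht.le) x hx) (lt_of_mul_lt_mul_left hxδ ht.le)
  rw [hdiff, real_inner_smul_right, mul_left_comm]
  exact mul_le_mul_of_nonneg_left this ht.le

theorem IsConeSet.mem_limitingNormalCone_zero (hΩ : IsConeSet Ω) (hp : p ∈ Ω)
    (h : IsEpsNormal 0 w Ω p) : w ∈ limitingNormalCone Ω 0 := by
  have hshrink : Tendsto (fun k : ℕ => ((k : ℝ) + 1)⁻¹ • p) atTop (𝓝 0) := by
    simpa using (tendsto_one_div_add_atTop_nhds_zero_nat (𝕜 := ℝ)).smul_const p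
  exact ⟨fun _ => 0, fun k => ((k : ℝ) + 1)⁻¹ • p, fun _ => w, fun _ => le_rfl,
    tendsto_const_nhds, fun k => hΩ _ (by positivity) p hp, hshrink, tendsto_const_nhds,
    fun k => h.smul_of_isConeSet hΩ (by positivity)⟩

/-- Proximal normals are Fréchet normals. -/
theorem isEpsNormal_zero_smul_sub_of_forall_norm_sub_le (hq : ∀ x ∈ Ω, ‖z - q‖ ≤ ‖z - x‖)
    {t : ℝ} (ht : 0 ≤ t) : IsEpsNormal 0 (t • (z - q)) Ω q := by
  intro η hη
  refine ⟨η / (t + 1), by positivity, fun x hx hxq => ?_⟩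
  have hquad : ⟪z - q, x - q⟫ ≤ ‖x - q‖ ^ 2 / 2 := by
    have := norm_sub_sq_real (z - q) (x - q)
    rw [sub_sub_sub_cancel_right] at this
    nlinarith [hq x hx, norm_nonneg (z - x), norm_nonneg (z - q)]
  have hsmall : t * ‖x - q‖ ≤ η :=
    calc t * ‖x - q‖ ≤ t * (η / (t + 1)) := by gcongr
      _ ≤ η := by rw [mul_div_assoc', div_le_iff₀ (by positivity)]; nlinarith
  rw [real_inner_smul_left, zero_add]
  calc t * ⟪z - q, x - q⟫ ≤ t * (‖x - q‖ ^ 2 / 2) := by gcongr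
    _ ≤ η * ‖x - q‖ := by nlinarith [norm_nonneg (x - q)]

end Normals

theorem exists_infDist_iInter_lt_of_isCompact {α : Type*} [PseudoMetricSpace α]
    {Λ : ℕ → Set α} (hclosed : ∀ i, IsClosed (Λ i)) (hne : ∀ i, (Λ i).Nonempty) {K : Set α}
    (hK : IsCompact K) {ρ : ℝ} (hρ : 0 < ρ) :
    ∃ k δ, 0 < δ ∧ ∀ x ∈ K, (∀ i < k, infDist x (Λ i) ≤ δ) → infDist x (⋂ i, Λ i) < ρ := by
  by_contra! hbad
  choose x hxK hxΛ hxρ using fun k : ℕ => hbad k (1 / ((k : ℝ) + 1)) Nat.one_div_pos_of_nat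
  obtain ⟨a, -, ψ, hψ, hlim⟩ := hK.tendsto_subseq hxK
  have hdist : ∀ S : Set α, Tendsto (fun j => infDist (x (ψ j)) S) atTop (𝓝 (infDist a S)) :=
    fun S => ((continuous_infDist_pt S).tendsto a).comp hlim
  have ha : a ∈ ⋂ i, Λ i := by
    refine Set.mem_iInter.2 fun i => ((hclosed i).mem_iff_infDist_zero (hne i)).2 ?_
    refine le_antisymm (le_of_tendsto_of_tendsto (hdist _)
      tendsto_one_div_add_atTop_nhds_zero_nat ?_) infDist_nonneg
    filter_upwards [eventually_gt_atTop i] with j hij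
    calc infDist (x (ψ j)) (Λ i) ≤ 1 / ((ψ j : ℝ) + 1) := hxΛ _ _ (hij.trans_le hψ.le_apply)
      _ ≤ 1 / ((j : ℝ) + 1) := by gcongr; exact hψ.le_apply
  have := ge_of_tendsto (hdist _) (Eventually.of_forall fun j => hxρ (ψ j))
  rw [infDist_zero_of_mem ha] at this
  linarith

theorem inner_le_norm_mul_infDist {S : Set E} (hS : S.Nonempty) {v : E}
    (hv : ∀ q ∈ S, ⟪v, q⟫ ≤ 0) (z : E) : ⟪v, z⟫ ≤ ‖v‖ * infDist z S := by
  rcases (norm_nonneg v).eq_or_lt with hv0 | hvpos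
  · simp [norm_eq_zero.1 hv0.symm]
  rw [← div_le_iff₀' hvpos, le_infDist hS]
  intro q hq
  rw [div_le_iff₀' hvpos, dist_eq_norm]
  calc ⟪v, z⟫ = ⟪v, z - q⟫ + ⟪v, q⟫ := by rw [← inner_add_right, sub_add_cancel]
    _ ≤ ‖v‖ * ‖z - q‖ + 0 := add_le_add (real_inner_le_norm _ _) (hv q hq)
    _ = ‖v‖ * ‖z - q‖ := add_zero _

theorem eq_zero_of_forall_inner_le_mul_norm_sq {r : E} {c : ℝ}
    (h : ∀ y, ⟪r, y⟫ ≤ c * ‖y‖ ^ 2) : r = 0 := by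
  set t := (2 * (|c| + 1))⁻¹
  have ht : 0 < t := by positivity
  have hct : c * t ≤ 1 / 2 := by
    rw [← div_eq_mul_inv, div_le_iff₀ (by positivity)]
    linarith [le_abs_self c]
  have hr := h (t • r)
  rw [real_inner_smul_right, real_inner_self_eq_norm_sq, norm_smul, Real.norm_of_nonneg ht.le,
    mul_pow] at hr
  have : ‖r‖ ^ 2 ≤ 0 := by
    nlinarith [mul_le_mul_of_nonneg_right hct (by positivity : 0 ≤ t * ‖r‖ ^ 2)]
  simpa using this

section Penalty

variable {ι : Type*} (Λ : ι → Set E) (s : Finset ι) (σ : ℝ) (v : E)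

noncomputable def penalty (x : E) : ℝ :=
  (2 * σ)⁻¹ * ∑ i ∈ s, infDist x (Λ i) ^ 2 + ‖x‖ ^ 2 / 2 - ⟪v, x⟫

theorem continuous_penalty : Continuous (penalty Λ s σ v) := by
  have := fun i => continuous_infDist_pt (Λ i)
  unfold penalty
  fun_prop

theorem penalty_zero (h0 : ∀ i ∈ s, (0 : E) ∈ Λ i) : penalty Λ s σ v 0 = 0 := by
  have : ∑ i ∈ s, infDist (0 : E) (Λ i) ^ 2 = 0 :=
    Finset.sum_eq_zero fun i hi => by simp [infDist_zero_of_mem (h0 i hi)]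
  simp [penalty, this]

theorem exists_forall_penalty_le [ProperSpace E] (hσ : 0 ≤ σ) :
    ∃ z, ∀ y, penalty Λ s σ v z ≤ penalty Λ s σ v y := by
  refine (continuous_penalty Λ s σ v).exists_forall_le <|
    tendsto_atTop_mono' _ ?_ tendsto_norm_cocompact_atTop
  filter_upwards [tendsto_norm_cocompact_atTop.eventually_ge_atTop (2 * (‖v‖ + 1))] with y hy
  have hpen : ‖y‖ ^ 2 / 2 - ‖v‖ * ‖y‖ ≤ penalty Λ s σ v y := by
    have := real_inner_le_norm v y
    have : 0 ≤ (2 * σ)⁻¹ * ∑ i ∈ s, infDist y (Λ i) ^ 2 := by positivity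
    unfold penalty
    linarith
  nlinarith [norm_nonneg y]

theorem sub_eq_sum_smul_of_forall_penalty_le (hσ : 0 < σ) {z : E} {p : ι → E}
    (hp : ∀ i ∈ s, p i ∈ Λ i) (hzp : ∀ i ∈ s, infDist z (Λ i) = ‖z - p i‖)
    (hmin : ∀ y, penalty Λ s σ v z ≤ penalty Λ s σ v y) :
    v - z = ∑ i ∈ s, σ⁻¹ • (z - p i) := by
  -- The penalty lies below the quadratic obtained by replacing `infDist · (Λ i)` with
  -- `‖· - p i‖`, with equality at `z`; so `z` minimizes that quadratic too.
  rw [← sub_eq_zero]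
  refine eq_zero_of_forall_inner_le_mul_norm_sq (c := (s.card / σ + 1) / 2) fun h => ?_
  have hexpand : ∀ i ∈ s, infDist (z + h) (Λ i) ^ 2 ≤
      infDist z (Λ i) ^ 2 + 2 * ⟪z - p i, h⟫ + ‖h‖ ^ 2 := by
    intro i hi
    rw [hzp i hi, ← norm_add_sq_real, sub_add_eq_add_sub]
    exact pow_le_pow_left₀ infDist_nonneg
      ((infDist_le_dist_of_mem (hp i hi)).trans_eq (dist_eq_norm _ _)) 2
  have hsum := Finset.sum_le_sum hexpand
  rw [Finset.sum_add_distrib, Finset.sum_add_distrib, ← Finset.mul_sum, sum_const,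
    nsmul_eq_mul] at hsum
  have hmin' := hmin (z + h)
  rw [penalty, penalty, norm_add_sq_real, inner_add_right] at hmin'
  rw [inner_sub_left, inner_sub_left, sum_inner]
  simp only [real_inner_smul_left, ← Finset.mul_sum]
  have := mul_le_mul_of_nonneg_left hsum (by positivity : 0 ≤ (2 * σ)⁻¹)
  linear_combination hmin' + this

variable {Λ s σ v} {z : E}

theorem norm_sq_le_of_penalty_nonpos (hσ : 0 ≤ σ) (h : penalty Λ s σ v z ≤ 0) :
    ‖z‖ ^ 2 ≤ 2 * ⟪v, z⟫ := by
  have : 0 ≤ (2 * σ)⁻¹ * ∑ i ∈ s, infDist z (Λ i) ^ 2 := by positivity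
  unfold penalty at h
  linarith

theorem norm_le_of_penalty_nonpos (hσ : 0 ≤ σ) (h : penalty Λ s σ v z ≤ 0) :
    ‖z‖ ≤ 2 * ‖v‖ := by
  by_contra! hlt
  have hz : 0 < ‖z‖ := (by positivity : 0 ≤ 2 * ‖v‖).trans_lt hlt
  nlinarith [norm_sq_le_of_penalty_nonpos hσ h, real_inner_le_norm v z,
    mul_lt_mul_of_pos_right hlt hz]

theorem infDist_sq_le_of_penalty_nonpos (hσ : 0 < σ) (h : penalty Λ s σ v z ≤ 0) {i : ι}
    (hi : i ∈ s) : infDist z (Λ i) ^ 2 ≤ 4 * σ * ‖v‖ ^ 2 := by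
  have hsum : ∑ j ∈ s, infDist z (Λ j) ^ 2 ≤ 2 * σ * (‖v‖ * ‖z‖) := by
    unfold penalty at h
    rw [← div_le_iff₀' (by positivity), div_eq_inv_mul]
    nlinarith [real_inner_le_norm v z]
  calc infDist z (Λ i) ^ 2 ≤ ∑ j ∈ s, infDist z (Λ j) ^ 2 :=
        single_le_sum (fun j _ => sq_nonneg (infDist z (Λ j))) hi
    _ ≤ 2 * σ * (‖v‖ * ‖z‖) := hsum
    _ ≤ 2 * σ * (‖v‖ * (2 * ‖v‖)) := by
        gcongr; exact norm_le_of_penalty_nonpos hσ.le h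
    _ = 4 * σ * ‖v‖ ^ 2 := by ring

end Penalty

theorem exists_sum_isEpsNormal_near_of_inner_nonpos [ProperSpace E] {Λ : ℕ → Set E}
    (hclosed : ∀ i, IsClosed (Λ i)) (h0 : ∀ i, (0 : E) ∈ Λ i) {v : E}
    (hv : ∀ x ∈ ⋂ i, Λ i, ⟪v, x⟫ ≤ 0) {ε : ℝ} (hε : 0 < ε) :
    ∃ (s : Finset ℕ) (w : ℕ → E), (∀ i, ∃ p ∈ Λ i, IsEpsNormal 0 (w i) (Λ i) p) ∧
      ‖v - ∑ i ∈ s, w i‖ < ε := by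
  -- `ρ` and `σ` are chosen so that `2 ‖v‖ ρ < ε ^ 2` and `4 σ ‖v‖ ^ 2 ≤ δ ^ 2`.
  set ρ := ε ^ 2 / (2 * ‖v‖ + 1)
  obtain ⟨k, δ, hδ, happrox⟩ := exists_infDist_iInter_lt_of_isCompact hclosed
    (fun i => ⟨0, h0 i⟩) (isCompact_closedBall (0 : E) (2 * ‖v‖)) (by positivity : 0 < ρ)
  set σ := δ ^ 2 / (4 * ‖v‖ ^ 2 + 1)
  have hσ : 0 < σ := by positivity
  obtain ⟨z, hzmin⟩ := exists_forall_penalty_le Λ (range k) σ v hσ.le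
  choose p hpΛ hpz using fun i => (hclosed i).exists_infDist_eq_dist ⟨0, h0 i⟩ z
  have hzp : ∀ i, infDist z (Λ i) = ‖z - p i‖ := fun i => (hpz i).trans (dist_eq_norm _ _)
  have hnearest : ∀ i, ∀ x ∈ Λ i, ‖z - p i‖ ≤ ‖z - x‖ := fun i x hx =>
    (hzp i).symm.trans_le ((infDist_le_dist_of_mem hx).trans_eq (dist_eq_norm _ _))
  refine ⟨range k, fun i => σ⁻¹ • (z - p i), fun i => ⟨p i, hpΛ i,
    isEpsNormal_zero_smul_sub_of_forall_norm_sub_le (hnearest i) (inv_nonneg.2 hσ.le)⟩, ?_⟩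
  rw [← sub_eq_sum_smul_of_forall_penalty_le Λ _ σ v hσ (fun i _ => hpΛ i) (fun i _ => hzp i)
    hzmin, sub_sub_cancel]
  have hpen : penalty Λ (range k) σ v z ≤ 0 :=
    (hzmin 0).trans_eq (penalty_zero Λ _ σ v fun i _ => h0 i)
  have hzΛ : infDist z (⋂ i, Λ i) < ρ := by
    refine happrox z (mem_closedBall_zero_iff.2 (norm_le_of_penalty_nonpos hσ.le hpen))
      fun i hi => (pow_le_pow_iff_left₀ infDist_nonneg hδ.le two_ne_zero).1 ?_
    calc infDist z (Λ i) ^ 2 ≤ 4 * σ * ‖v‖ ^ 2 :=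
          infDist_sq_le_of_penalty_nonpos hσ hpen (mem_range.2 hi)
      _ ≤ δ ^ 2 := by
          have : σ * (4 * ‖v‖ ^ 2 + 1) = δ ^ 2 := div_mul_cancel₀ _ (by positivity)
          linarith
  have hvz := inner_le_norm_mul_infDist ⟨0, Set.mem_iInter.2 h0⟩ hv z
  have hρ : 2 * ‖v‖ * ρ < ε ^ 2 := by
    have : ρ * (2 * ‖v‖ + 1) = ε ^ 2 := div_mul_cancel₀ _ (by positivity)
    have : 0 < ρ := by positivity
    linarith
  refine (pow_lt_pow_iff_left₀ (norm_nonneg z) hε.le two_ne_zero).1 ?_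
  calc ‖z‖ ^ 2 ≤ 2 * ⟪v, z⟫ := norm_sq_le_of_penalty_nonpos hσ.le hpen
    _ ≤ 2 * ‖v‖ * ρ := by nlinarith [mul_le_mul_of_nonneg_left hzΛ.le (norm_nonneg v)]
    _ < ε ^ 2 := hρ

theorem frechet_normal_cone_closure_estimate_general (n : ℕ)
    (Λ : ℕ → Set (EuclideanSpace ℝ (Fin n)))
    (hcone : ∀ i, IsConeSet (Λ i)) (hclosed : ∀ i, IsClosed (Λ i))
    (h0 : ∀ i, (0 : EuclideanSpace ℝ (Fin n)) ∈ Λ i) :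
    frechetNormalCone (⋂ i, Λ i) 0 ⊆
      closure {v | ∃ (I : Finset ℕ) (x : ℕ → EuclideanSpace ℝ (Fin n)),
        (∀ i, x i ∈ limitingNormalCone (Λ i) 0) ∧ v = ∑ i ∈ I, x i} := by
  intro v hv
  have hpolar : ∀ x ∈ ⋂ i, Λ i, ⟪v, x⟫ ≤ 0 := fun x hx => by
    simpa using (IsConeSet.iInter hcone).inner_le_mul_norm_of_isEpsNormal_zero hv hx
  refine Metric.mem_closure_iff.2 fun ε hε => ?_
  obtain ⟨s, w, hw, hvw⟩ := exists_sum_isEpsNormal_near_of_inner_nonpos hclosed h0 hpolar hε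
  refine ⟨_, ⟨s, w, fun i => ?_, rfl⟩, by rwa [dist_eq_norm]⟩
  obtain ⟨p, hp, hnormal⟩ := hw i
  exact (hcone i).mem_limitingNormalCone_zero hp hnormal

/-- closure estimate of the Fréchet normal cone to a countable
intersection via finite sums of limiting normals. -/
theorem frechet_normal_cone_closure_estimate (n : ℕ)
    (Λ : ℕ → Set (EuclideanSpace ℝ (Fin n)))
    (hcone : ∀ i, IsConeSet (Λ i)) (hclosed : ∀ i, IsClosed (Λ i))
    (h0 : ∀ i, (0 : EuclideanSpace ℝ (Fin n)) ∈ Λ i)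
    (hqc : NormalQualification n Λ) :
    frechetNormalCone (⋂ i, Λ i) 0 ⊆
      closure {v | ∃ (I : Finset ℕ) (x : ℕ → EuclideanSpace ℝ (Fin n)),
        (∀ i, x i ∈ limitingNormalCone (Λ i) 0) ∧ v = ∑ i ∈ I, x i} :=
  frechet_normal_cone_closure_estimate_general n Λ hcone hclosed h0
end

section
/- Let Ω ⊆ ℝⁿ be closed around x̄ ∈ Ω, and let Λ := T(x̄;Ω) be the contingent cone to Ω at x̄. Then N(0;Λ) ⊆ N(x̄;Ω), i.e., the contingent cone is tangentially normally enclosed into Ω at x̄. -/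
open Filter Topology

variable {E : Type*} [NormedAddCommGroup E] [InnerProductSpace ℝ E]

/-- The Bouligand–Severi contingent cone `T(x₀;Ω)`. -/
def contingentCone {E : Type*} [NormedAddCommGroup E] [NormedSpace ℝ E]
    (x₀ : E) (Ω : Set E) : Set E :=
  {v | ∃ (t : ℕ → ℝ) (w : ℕ → E), (∀ k, 0 < t k) ∧ Tendsto t atTop (𝓝 0) ∧
    Tendsto w atTop (𝓝 v) ∧ ∀ k, x₀ + t k • w k ∈ Ω}

/-!
Let `w` be an `ε`-normal to `Λ = T(x₀;Ω)` at `u ∈ Λ`, where `x₀ + t_j u_j ∈ Ω` with `t_j ↓ 0`,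
`u_j → u`. Project `x₀ + t_j (u_j + s w)` onto `Ω` and rescale by `t_j⁻¹`: a cluster point `ζ`
of the rescaled projections lies in `Λ` and is at least as close to `u + s w` as `u` is, so
`‖ζ - u‖² ≤ 2 s ⟪w, ζ - u⟫ ≤ 2 s (ε + η) ‖ζ - u‖`. The rescaled projection residuals are proximal,
hence Fréchet, normals to `Ω` at points tending to `x₀`, and they converge to
`w + s⁻¹ (u - ζ)`, which is therefore within `2 (ε + η)` of `w`. Along the sequence defining a
limiting normal to `Λ` at `0` the `ε`'s tend to `0`, so its limit is a limit of Fréchet normals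
to `Ω` at points tending to `x₀`.
-/

open Metric

lemma dist_add_smul_le_dist_iff (c : ℝ) (w p q : E) :
    dist (q + c • w) p ≤ dist (q + c • w) q ↔ ‖p - q‖ ^ 2 ≤ 2 * c * inner ℝ w (p - q) := by
  rw [dist_eq_norm, dist_eq_norm, ← sq_le_sq₀ (norm_nonneg _) (norm_nonneg _),
    show q + c • w - p = c • w - (p - q) by abel, add_sub_cancel_left, norm_sub_sq_real,
    real_inner_smul_left]
  constructor <;> intro h <;> linarith

lemma dist_le_dist_add_smul_iff (c : ℝ) (w p q : E) :
    dist (q + c • w) q ≤ dist (q + c • w) p ↔ 2 * c * inner ℝ w (p - q) ≤ ‖p - q‖ ^ 2 := by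
  rw [dist_eq_norm, dist_eq_norm, ← sq_le_sq₀ (norm_nonneg _) (norm_nonneg _),
    show q + c • w - p = c • w - (p - q) by abel, add_sub_cancel_left, norm_sub_sq_real,
    real_inner_smul_left]
  constructor <;> intro h <;> linarith

lemma mem_frechetNormalCone_of_forall_dist_le {Ω : Set E} {z w : E} {c : ℝ} (hc : 0 < c)
    (hnear : ∀ x ∈ Ω, dist (z + c • w) z ≤ dist (z + c • w) x) :
    w ∈ frechetNormalCone Ω z := by
  intro η hη
  refine ⟨2 * c * η, by positivity, fun x hx hxz => ?_⟩
  have h := (dist_le_dist_add_smul_iff c w x z).1 (hnear x hx)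
  have hx : 0 ≤ ‖x - z‖ := norm_nonneg _
  nlinarith

/-- `Limsup_{z →Ω x₀} N̂(z; Ω)`, the finite-dimensional form of the limiting normal cone. -/
def limsupFrechetNormalCone (Ω : Set E) (x₀ : E) : Set E :=
  {v | ∀ γ > 0, ∃ z ∈ Ω, dist z x₀ < γ ∧ ∃ w ∈ frechetNormalCone Ω z, dist w v < γ}

lemma limsupFrechetNormalCone_subset_limitingNormalCone (Ω : Set E) (x₀ : E) :
    limsupFrechetNormalCone Ω x₀ ⊆ limitingNormalCone Ω x₀ := by
  intro v hv
  choose z hz hzx w hw hwv using fun k : ℕ => hv (1 / (k + 1)) Nat.one_div_pos_of_nat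
  have h := tendsto_one_div_add_atTop_nhds_zero_nat (𝕜 := ℝ)
  refine ⟨fun _ => 0, z, w, fun _ => le_rfl, tendsto_const_nhds, hz, ?_, ?_, hw⟩
  · exact tendsto_iff_dist_tendsto_zero.2
      (squeeze_zero (fun _ => dist_nonneg) (fun k => (hzx k).le) h)
  · exact tendsto_iff_dist_tendsto_zero.2
      (squeeze_zero (fun _ => dist_nonneg) (fun k => (hwv k).le) h)

lemma isClosed_limsupFrechetNormalCone (Ω : Set E) (x₀ : E) :
    IsClosed (limsupFrechetNormalCone Ω x₀) := by
  refine isClosed_of_closure_subset fun v hv γ hγ => ?_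
  obtain ⟨v', hv', hvv'⟩ := Metric.mem_closure_iff.1 hv (γ / 2) (by positivity)
  obtain ⟨z, hz, hzx, w, hw, hwv'⟩ := hv' (γ / 2) (by positivity)
  refine ⟨z, hz, by linarith, w, hw, ?_⟩
  calc dist w v ≤ dist w v' + dist v' v := dist_triangle _ _ _
    _ < γ := by rw [dist_comm v']; linarith

variable [ProperSpace E]

lemma exists_rescaled_nearest_point {Ω : Set E} (hΩ : IsClosed Ω) {x₀ a w : E} {t s : ℝ}
    (ht : 0 < t) (hs : 0 < s) (ha : x₀ + t • a ∈ Ω) :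
    ∃ ζ, x₀ + t • ζ ∈ Ω ∧ dist (a + s • w) ζ ≤ dist (a + s • w) a ∧
      w + s⁻¹ • (a - ζ) ∈ frechetNormalCone Ω (x₀ + t • ζ) := by
  set y := x₀ + t • (a + s • w)
  obtain ⟨z, hzΩ, hz⟩ := hΩ.exists_infDist_eq_dist ⟨_, ha⟩ y
  have hnear : ∀ x ∈ Ω, dist y z ≤ dist y x := fun x hx => hz ▸ infDist_le_dist_of_mem hx
  have hrescale : ∀ b, dist y (x₀ + t • b) = t * dist (a + s • w) b := fun b => by
    rw [dist_eq_norm, dist_eq_norm, show y - (x₀ + t • b) = t • (a + s • w - b) by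
      simp only [y, smul_sub, smul_add]; abel, norm_smul, Real.norm_of_nonneg ht.le]
  set ζ := t⁻¹ • (z - x₀)
  have hzζ : x₀ + t • ζ = z := by rw [smul_inv_smul₀ ht.ne']; abel
  refine ⟨ζ, hzζ ▸ hzΩ, ?_, ?_⟩
  · have h := hnear _ ha
    rw [← hzζ, hrescale, hrescale] at h
    exact le_of_mul_le_mul_left h ht
  · refine mem_frechetNormalCone_of_forall_dist_le (mul_pos ht hs) fun x hx => ?_
    have hy : x₀ + t • ζ + (t * s) • (w + s⁻¹ • (a - ζ)) = y := by
      rw [smul_add, mul_smul, mul_smul, smul_inv_smul₀ hs.ne']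
      simp only [y, smul_add, smul_sub]; abel
    rw [hy, hzζ]
    exact hnear x hx

lemma exists_mem_contingentCone_dist_le {Ω : Set E} (hΩ : IsClosed Ω) {x₀ u : E}
    (hu : u ∈ contingentCone x₀ Ω) {s : ℝ} (hs : 0 < s) (w : E) :
    ∃ ζ ∈ contingentCone x₀ Ω, dist (u + s • w) ζ ≤ dist (u + s • w) u ∧
      w + s⁻¹ • (u - ζ) ∈ limsupFrechetNormalCone Ω x₀ := by
  obtain ⟨t, a, ht, ht0, ha, hmem⟩ := hu
  choose ζ hζΩ hζnear hζnormal using fun j =>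
    exists_rescaled_nearest_point (w := w) hΩ (ht j) hs (hmem j)
  obtain ⟨C, hC⟩ := (isBounded_range_of_tendsto _ (ha.add_const (s • w))).exists_norm_le
  have hbdd : ∀ j, ζ j ∈ closedBall 0 (C + ‖s • w‖) := fun j => by
    rw [mem_closedBall_zero_iff]
    calc ‖ζ j‖ ≤ ‖a j + s • w‖ + dist (a j + s • w) (ζ j) := by
          rw [dist_comm, dist_eq_norm]; exact norm_le_norm_add_norm_sub' _ _
      _ ≤ C + ‖s • w‖ := by
          gcongr
          · exact hC _ ⟨j, rfl⟩
          · simpa [dist_eq_norm] using hζnear j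
  obtain ⟨ζ₀, -, φ, hφ, hζφ⟩ := tendsto_subseq_of_bounded isBounded_closedBall hbdd
  have haφ := ha.comp hφ.tendsto_atTop
  have htφ := ht0.comp hφ.tendsto_atTop
  refine ⟨ζ₀, ⟨t ∘ φ, ζ ∘ φ, fun j => ht _, htφ, hζφ, fun j => hζΩ _⟩, ?_, fun γ hγ => ?_⟩
  · exact le_of_tendsto_of_tendsto' ((haφ.add_const _).dist hζφ) ((haφ.add_const _).dist haφ)
      fun j => hζnear (φ j)
  · have hz : Tendsto (fun j => x₀ + t (φ j) • ζ (φ j)) atTop (𝓝 x₀) := by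
      simpa using tendsto_const_nhds.add (htφ.smul hζφ)
    have hn : Tendsto (fun j => w + s⁻¹ • (a (φ j) - ζ (φ j))) atTop
        (𝓝 (w + s⁻¹ • (u - ζ₀))) :=
      tendsto_const_nhds.add ((haφ.sub hζφ).const_smul _)
    obtain ⟨j, hzj, hnj⟩ :=
      ((hz.eventually (ball_mem_nhds _ hγ)).and (hn.eventually (ball_mem_nhds _ hγ))).exists
    exact ⟨_, hζΩ _, hzj, _, hζnormal _, hnj⟩

lemma exists_mem_limsupFrechetNormalCone_dist_lt {Ω : Set E} (hΩ : IsClosed Ω) {x₀ u w : E}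
    {ε γ : ℝ} (hε : 0 ≤ ε) (hγ : 0 < γ) (hu : u ∈ contingentCone x₀ Ω)
    (hw : IsEpsNormal ε w (contingentCone x₀ Ω) u) :
    ∃ v ∈ limsupFrechetNormalCone Ω x₀, dist v w < 2 * ε + γ := by
  obtain ⟨δ, hδ, hnormal⟩ := hw (γ / 4) (by positivity)
  set s := δ / (4 * (‖w‖ + 1))
  have hs : 0 < s := by positivity
  have hsw : 2 * (s * ‖w‖) < δ := by
    have : s * (4 * (‖w‖ + 1)) = δ := div_mul_cancel₀ _ (by positivity)
    nlinarith
  obtain ⟨ζ, hζ, hnear, hv⟩ := exists_mem_contingentCone_dist_le hΩ hu hs w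
  have hdist : dist (u + s • w) u = s * ‖w‖ := by
    rw [dist_eq_norm, add_sub_cancel_left, norm_smul, Real.norm_of_nonneg hs.le]
  have hζu : ‖ζ - u‖ < δ := by
    rw [← dist_eq_norm]
    linarith [dist_triangle ζ (u + s • w) u, dist_comm ζ (u + s • w)]
  have hinner := hnormal ζ hζ hζu
  have hsq := (dist_add_smul_le_dist_iff s w ζ u).1 hnear
  have hζu' : ‖ζ - u‖ ≤ 2 * s * (ε + γ / 4) := by
    have hsq' : ‖ζ - u‖ ^ 2 ≤ 2 * s * (ε + γ / 4) * ‖ζ - u‖ := by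
      nlinarith [mul_le_mul_of_nonneg_left hinner (by positivity : (0 : ℝ) ≤ 2 * s)]
    by_contra! h
    nlinarith [mul_lt_mul_of_pos_right h ((by positivity : 0 < 2 * s * (ε + γ / 4)).trans h)]
  refine ⟨_, hv, ?_⟩
  calc dist (w + s⁻¹ • (u - ζ)) w = s⁻¹ * ‖ζ - u‖ := by
        rw [dist_eq_norm, add_sub_cancel_left, norm_smul, norm_sub_rev,
          Real.norm_of_nonneg (inv_nonneg.2 hs.le)]
    _ ≤ s⁻¹ * (2 * s * (ε + γ / 4)) := by gcongr
    _ = 2 * ε + γ / 2 := by field_simp; ring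
    _ < 2 * ε + γ := by linarith

theorem contingent_cone_tangentially_normally_enclosed_general (n : ℕ)
    (Ω : Set (EuclideanSpace ℝ (Fin n))) (hΩ : IsClosed Ω)
    (x₀ : EuclideanSpace ℝ (Fin n)) :
    limitingNormalCone (contingentCone x₀ Ω) 0 ⊆ limitingNormalCone Ω x₀ := by
  rintro v ⟨ε, u, w, hε0, hε, hu, -, hw, hnormal⟩
  refine limsupFrechetNormalCone_subset_limitingNormalCone Ω x₀ <|
    (isClosed_limsupFrechetNormalCone Ω x₀).closure_subset <|
      Metric.mem_closure_iff.2 fun γ hγ => ?_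
  obtain ⟨k, hεk, hwk⟩ := ((hε.eventually (gt_mem_nhds (show (0 : ℝ) < γ / 4 by positivity))).and
    (hw.eventually (ball_mem_nhds v (show 0 < γ / 4 by positivity)))).exists
  obtain ⟨v', hv', hv'w⟩ :=
    exists_mem_limsupFrechetNormalCone_dist_lt hΩ (hε0 k) (by positivity : 0 < γ / 4) (hu k)
      (hnormal k)
  refine ⟨v', hv', ?_⟩
  linarith [dist_triangle v (w k) v', dist_comm v (w k), dist_comm (w k) v']

/-- TNE property of the contingent cone in finite dimensions:
`N(0; T(x₀;Ω)) ⊆ N(x₀;Ω)` for any set `Ω ⊆ ℝⁿ` closed around `x₀ ∈ Ω`. -/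
theorem contingent_cone_tangentially_normally_enclosed (n : ℕ)
    (Ω : Set (EuclideanSpace ℝ (Fin n))) (hΩ : IsClosed Ω)
    (x₀ : EuclideanSpace ℝ (Fin n)) (hx₀ : x₀ ∈ Ω) :
    limitingNormalCone (contingentCone x₀ Ω) 0 ⊆ limitingNormalCone Ω x₀ :=
  contingent_cone_tangentially_normally_enclosed_general n Ω hΩ x₀
end

section
/- Let x̄ ∈ ⋂_{i=1}^∞ Ω_i be a contingent local extremal point of a countable system of closed sets {Ω_i}_{i∈ℕ} in ℝⁿ whose contingent cones satisfy ⋂_{i=1}^∞ T(x̄;Ω_i) = {0}. Then there exist x*_i ∈ N(0;T(x̄;Ω_i)) ⊆ N(x̄;Ω_i), i ∈ ℕ, with Σ_{i=1}^∞ 2^{-i} x*_i = 0 and Σ_{i=1}^∞ 2^{-i} ‖x*_i‖² = 1. -/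
open Filter Topology

variable {E : Type*} [NormedAddCommGroup E] [InnerProductSpace ℝ E]

/-!
Minimise `f x = ∑ 2^{-(i+1)} d(x + a i, T i)²` over the contingent cones `T i = T(x₀; Ω i)`.
As the cones meet only at `0`, `f` grows quadratically, so it has a minimiser `x`, and
extremality makes `f x > 0`. Comparing `f (x + h)` with the squared distances to fixed nearest
points `w i` shows that the residuals `x + a i - w i` have weighted mean `0`; divided by
`√(f x)` they are proximal normals to `T i` at `w i`, hence limiting normals to `T i` at `0` and
to `Ω i` at `x₀`.
-/

open Metric
open scoped Pointwise

section ContingentCone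

variable {F : Type*} [NormedAddCommGroup F] [NormedSpace ℝ F] {x₀ : F} {Ω : Set F}

lemma zero_mem_contingentCone (h : x₀ ∈ Ω) : (0 : F) ∈ contingentCone x₀ Ω :=
  ⟨fun k => 1 / (k + 1), fun _ => 0, fun _ => by positivity,
    tendsto_one_div_add_atTop_nhds_zero_nat, tendsto_const_nhds, fun _ => by simpa using h⟩

lemma mem_contingentCone_iff {v : F} :
    v ∈ contingentCone x₀ Ω ↔
      ∀ ε > 0, ∃ t ∈ Set.Ioo 0 ε, ∃ w ∈ ball v ε, x₀ + t • w ∈ Ω := by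
  constructor
  · rintro ⟨t, w, ht, ht0, hw, hmem⟩ ε hε
    obtain ⟨k, htk, hwk⟩ :=
      ((ht0.eventually (gt_mem_nhds hε)).and (hw.eventually (ball_mem_nhds v hε))).exists
    exact ⟨t k, ⟨ht k, htk⟩, w k, hwk, hmem k⟩
  · intro h
    choose t ht w hw hmem using fun k : ℕ => h (1 / (k + 1)) (by positivity)
    refine ⟨t, w, fun k => (ht k).1, ?_, ?_, hmem⟩
    · exact squeeze_zero (fun k => (ht k).1.le) (fun k => (ht k).2.le)
        tendsto_one_div_add_atTop_nhds_zero_nat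
    · exact tendsto_iff_dist_tendsto_zero.2 <| squeeze_zero (fun _ => dist_nonneg)
        (fun k => (mem_ball.1 (hw k)).le) tendsto_one_div_add_atTop_nhds_zero_nat

lemma isClosed_contingentCone : IsClosed (contingentCone x₀ Ω) := by
  refine isClosed_of_closure_subset fun v hv => mem_contingentCone_iff.2 fun ε hε => ?_
  obtain ⟨v', hv', hvv'⟩ := Metric.mem_closure_iff.1 hv (ε / 2) (half_pos hε)
  obtain ⟨t, ht, w, hw, hmem⟩ := mem_contingentCone_iff.1 hv' (ε / 2) (half_pos hε)
  refine ⟨t, ⟨ht.1, ht.2.trans (half_lt_self hε)⟩, w, ?_, hmem⟩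
  calc dist w v ≤ dist w v' + dist v' v := dist_triangle w v' v
    _ < ε / 2 + ε / 2 := add_lt_add (mem_ball.1 hw) (by rwa [dist_comm])
    _ = ε := add_halves ε

/-- Every cluster point of `w'` lies in the contingent cone and is no farther from `z` than `w`,
and the `w' k` eventually stay in a compact ball. -/
lemma tendsto_of_norm_sub_le_of_unique_nearest [ProperSpace F] {t : ℕ → ℝ} {w' u : ℕ → F}
    {z w : F} (ht : ∀ k, 0 < t k) (ht0 : Tendsto t atTop (𝓝 0))
    (hmem : ∀ k, x₀ + t k • w' k ∈ Ω) (hu : Tendsto u atTop (𝓝 w))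
    (hle : ∀ k, ‖z - w' k‖ ≤ ‖z - u k‖)
    (huniq : ∀ x ∈ contingentCone x₀ Ω, ‖z - x‖ ≤ ‖z - w‖ → x = w) :
    Tendsto w' atTop (𝓝 w) := by
  have hdist : Tendsto (fun k => ‖z - u k‖) atTop (𝓝 ‖z - w‖) :=
    (tendsto_const_nhds.sub hu).norm
  refine (isCompact_closedBall z (‖z - w‖ + 1)).tendsto_nhds_of_unique_mapClusterPt ?_
    fun a _ ha => ?_
  · filter_upwards [hdist.eventually (gt_mem_nhds (lt_add_one _))] with k hk
    rw [mem_closedBall, dist_comm, dist_eq_norm]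
    exact (hle k).trans hk.le
  · obtain ⟨φ, hφ, hlim⟩ := ha.tendsto_subseq
    refine huniq a ⟨t ∘ φ, w' ∘ φ, fun k => ht _, ht0.comp hφ.tendsto_atTop, hlim,
      fun k => hmem _⟩ ?_
    exact le_of_tendsto_of_tendsto' (tendsto_const_nhds.sub hlim).norm
      (hdist.comp hφ.tendsto_atTop) fun k => hle _

end ContingentCone

lemma isConeSet_contingentCone {x₀ : E} {Ω : Set E} (h : x₀ ∈ Ω) :
    IsConeSet (contingentCone x₀ Ω) := by
  intro s hs v hv
  rcases hs.eq_or_lt with rfl | hs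
  · simpa using zero_mem_contingentCone h
  obtain ⟨t, w, ht, ht0, hw, hmem⟩ := hv
  refine ⟨fun k => t k / s, fun k => s • w k, fun k => div_pos (ht k) hs,
    by simpa using ht0.div_const s, hw.const_smul s, fun k => ?_⟩
  rw [smul_smul, div_mul_cancel₀ _ hs.ne']
  exact hmem k

lemma infDist_smul_of_isConeSet {Λ : Set E} (hΛ : IsConeSet Λ) {t : ℝ} (ht : 0 < t) (x : E) :
    infDist (t • x) Λ = t * infDist x Λ := by
  have hΛt : t • Λ = Λ :=
    (Set.smul_set_subset_iff.2 fun v hv => hΛ t ht.le v hv).antisymm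
      fun v hv => ⟨t⁻¹ • v, hΛ _ (inv_nonneg.2 ht.le) v hv, smul_inv_smul₀ ht.ne' v⟩
  conv_lhs => rw [← hΛt]
  rw [infDist_smul₀ ht.ne', Real.norm_of_nonneg ht.le]

section ProximalNormal

def IsProximalNormal (v : E) (S : Set E) (w : E) : Prop :=
  ∃ K > 0, ∀ x ∈ S, inner ℝ v (x - w) ≤ K * ‖x - w‖ ^ 2

variable {v w : E} {S : Set E}

lemma isProximalNormal_sub_of_infDist_eq {u : E} (hd : infDist u S = dist u w) :
    IsProximalNormal (u - w) S w := by
  refine ⟨1 / 2, one_half_pos, fun x hx => ?_⟩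
  have hnear : ‖u - w‖ ≤ ‖u - x‖ := by
    rw [← dist_eq_norm, ← dist_eq_norm, ← hd]
    exact infDist_le_dist_of_mem hx
  have hexp : ‖u - x‖ ^ 2 = ‖u - w‖ ^ 2 - 2 * inner ℝ (u - w) (x - w) + ‖x - w‖ ^ 2 := by
    rw [show u - x = (u - w) - (x - w) by abel, norm_sub_sq_real]
  nlinarith [pow_le_pow_left₀ (norm_nonneg _) hnear 2]

lemma IsProximalNormal.smul (hv : IsProximalNormal v S w) {c : ℝ} (hc : 0 < c) :
    IsProximalNormal (c • v) S w := by
  obtain ⟨K, hK, hvK⟩ := hv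
  refine ⟨c * K, mul_pos hc hK, fun x hx => ?_⟩
  rw [real_inner_smul_left, mul_assoc]
  exact mul_le_mul_of_nonneg_left (hvK x hx) hc.le

lemma IsProximalNormal.isEpsNormal_zero (hv : IsProximalNormal v S w) : IsEpsNormal 0 v S w := by
  obtain ⟨K, hK, hvK⟩ := hv
  refine fun η hη => ⟨η / K, div_pos hη hK, fun x hx hxw => ?_⟩
  have hKx : K * ‖x - w‖ ≤ η := by
    rw [lt_div_iff₀ hK] at hxw
    linarith
  calc inner ℝ v (x - w) ≤ K * ‖x - w‖ ^ 2 := hvK x hx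
    _ = (K * ‖x - w‖) * ‖x - w‖ := by ring
    _ ≤ (0 + η) * ‖x - w‖ := by rw [zero_add]; exact mul_le_mul_of_nonneg_right hKx (norm_nonneg _)

lemma IsProximalNormal.smul_right_of_isConeSet (hv : IsProximalNormal v S w) (hS : IsConeSet S)
    {s : ℝ} (hs : 0 < s) : IsProximalNormal v S (s • w) := by
  obtain ⟨K, hK, hvK⟩ := hv
  refine ⟨K / s, div_pos hK hs, fun x hx => ?_⟩
  have hx' : x - s • w = s • (s⁻¹ • x - w) := by rw [smul_sub, smul_inv_smul₀ hs.ne']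
  have h := hvK _ (hS _ (inv_nonneg.2 hs.le) x hx)
  rw [hx', real_inner_smul_right, norm_smul, Real.norm_of_nonneg hs.le]
  calc s * inner ℝ v (s⁻¹ • x - w) ≤ s * (K * ‖s⁻¹ • x - w‖ ^ 2) :=
        mul_le_mul_of_nonneg_left h hs.le
    _ = K / s * (s * ‖s⁻¹ • x - w‖) ^ 2 := by field_simp

/-- Slide the base point to `0` along its ray: proximal normality to a cone survives this. -/
lemma IsProximalNormal.mem_limitingNormalCone_zero (hv : IsProximalNormal v S w)
    (hS : IsConeSet S) (hw : w ∈ S) : v ∈ limitingNormalCone S 0 := by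
  have hs : Tendsto (fun k : ℕ => 1 / ((k : ℝ) + 1)) atTop (𝓝 0) :=
    tendsto_one_div_add_atTop_nhds_zero_nat
  refine ⟨fun _ => 0, fun k => (1 / ((k : ℝ) + 1)) • w, fun _ => v, fun _ => le_rfl,
    tendsto_const_nhds, fun k => hS _ (by positivity) w hw, by simpa using hs.smul_const w,
    tendsto_const_nhds, fun k => (hv.smul_right_of_isConeSet hS (by positivity)).isEpsNormal_zero⟩

lemma IsProximalNormal.exists_pos_eq_of_norm_le (hv : IsProximalNormal v S w) :
    ∃ c : ℝ, 0 < c ∧ ∀ x ∈ S, ‖w + c • v - x‖ ≤ ‖c • v‖ → x = w := by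
  obtain ⟨K, hK, hvK⟩ := hv
  refine ⟨(4 * K)⁻¹, by positivity, fun x hx hle => ?_⟩
  set c := (4 * K)⁻¹
  have hcK : c * K = 1 / 4 := by simp only [c]; field_simp
  have hexp : ‖w + c • v - x‖ ^ 2 = ‖c • v‖ ^ 2 - 2 * c * inner ℝ v (x - w) + ‖x - w‖ ^ 2 := by
    rw [show w + c • v - x = c • v - (x - w) by abel, norm_sub_sq_real, real_inner_smul_left]
    ring
  have hsq := pow_le_pow_left₀ (norm_nonneg _) hle 2
  have hc : 0 < c := by positivity
  have hinner := mul_le_mul_of_nonneg_left (hvK x hx) hc.le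
  have hxw : ‖x - w‖ ^ 2 ≤ 0 := by nlinarith
  exact sub_eq_zero.1 (norm_eq_zero.1 (pow_eq_zero_iff two_ne_zero |>.1 (hxw.antisymm (sq_nonneg _))))

/-- Project the points `x₀ + t (w + c v)` onto `Ω`: since `w` is the unique nearest point of
`T(x₀; Ω)` to `w + c v`, the rescaled projections converge to `w`, and the rescaled residuals
are Fréchet normals to `Ω` converging to `v`. -/
theorem IsProximalNormal.mem_limitingNormalCone_of_mem_contingentCone [ProperSpace E] {x₀ : E}
    {Ω : Set E} (hv : IsProximalNormal v (contingentCone x₀ Ω) w) (hΩ : IsClosed Ω)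
    (hx₀ : x₀ ∈ Ω) (hw : w ∈ contingentCone x₀ Ω) : v ∈ limitingNormalCone Ω x₀ := by
  obtain ⟨c, hc, huniq⟩ := hv.exists_pos_eq_of_norm_le
  obtain ⟨t, u, ht, ht0, hu, hmem⟩ := hw
  set z := w + c • v
  choose y hyΩ hyd using fun k => hΩ.exists_infDist_eq_dist ⟨x₀, hx₀⟩ (x₀ + t k • z)
  set w' : ℕ → E := fun k => (t k)⁻¹ • (y k - x₀)
  have hy : ∀ k, y k = x₀ + t k • w' k := fun k => by
    simp only [w', smul_inv_smul₀ (ht k).ne', add_sub_cancel]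
  have hres : ∀ k, x₀ + t k • z - y k = t k • (z - w' k) := fun k => by
    rw [hy k, smul_sub]
    abel
  have hle : ∀ k, ‖z - w' k‖ ≤ ‖z - u k‖ := fun k => by
    have h := (hyd k).symm.le.trans (infDist_le_dist_of_mem (hmem k))
    rw [dist_eq_norm, dist_eq_norm, hres, add_sub_add_left_eq_sub, ← smul_sub, norm_smul,
      norm_smul, Real.norm_of_nonneg (ht k).le] at h
    exact le_of_mul_le_mul_left h (ht k)
  have hw' : Tendsto w' atTop (𝓝 w) :=
    tendsto_of_norm_sub_le_of_unique_nearest ht ht0 (fun k => hy k ▸ hyΩ k) hu hle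
      (by simpa [z] using huniq)
  refine ⟨fun _ => 0, y, fun k => c⁻¹ • (z - w' k), fun _ => le_rfl, tendsto_const_nhds, hyΩ,
    ?_, ?_, fun k => ?_⟩
  · have h := (tendsto_const_nhds (x := x₀)).add (ht0.smul hw')
    rw [zero_smul, add_zero] at h
    exact h.congr fun k => (hy k).symm
  · have h := ((tendsto_const_nhds (x := z)).sub hw').const_smul c⁻¹
    rwa [add_sub_cancel_left, smul_smul, inv_mul_cancel₀ hc.ne', one_smul] at h
  · have hnormal := (isProximalNormal_sub_of_infDist_eq (hyd k)).smul
      (inv_pos.2 (mul_pos hc (ht k)))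
    rw [hres, smul_smul, mul_inv, mul_assoc, inv_mul_cancel₀ (ht k).ne', mul_one] at hnormal
    exact hnormal.isEpsNormal_zero

end ProximalNormal

lemma hasSum_one_div_two_pow_succ : HasSum (fun i : ℕ => (1 / 2 ^ (i + 1) : ℝ)) 1 := by
  convert hasSum_geometric_two' 1 using 2 with i
  rw [pow_succ, div_div, mul_comm]

lemma summable_mul_sq_of_le {σ f : ℕ → ℝ} {B : ℝ} (hσ : Summable σ) (hσ0 : ∀ i, 0 ≤ σ i)
    (hf0 : ∀ i, 0 ≤ f i) (hf : ∀ i, f i ≤ B) : Summable fun i => σ i * f i ^ 2 :=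
  (hσ.mul_right (B ^ 2)).of_nonneg_of_le (fun i => mul_nonneg (hσ0 i) (sq_nonneg _))
    fun i => mul_le_mul_of_nonneg_left (pow_le_pow_left₀ (hf0 i) (hf i) 2) (hσ0 i)

/-- Expanding the squares, the hypothesis at `h = -∑ σ i • v i` reads `‖∑ σ i • v i‖² ≤ 0`. -/
lemma hasSum_smul_eq_zero_of_forall_le [CompleteSpace E] {σ : ℕ → ℝ} {v : ℕ → E} {B : ℝ} (hσ : HasSum σ 1)
    (hσ0 : ∀ i, 0 ≤ σ i) (hv : ∀ i, ‖v i‖ ≤ B)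
    (hmin : ∀ h, ∑' i, σ i * ‖v i‖ ^ 2 ≤ ∑' i, σ i * ‖v i + h‖ ^ 2) :
    HasSum (fun i => σ i • v i) 0 := by
  have hS : Summable fun i => σ i • v i :=
    Summable.of_norm_bounded (hσ.summable.mul_right B) fun i => by
      rw [norm_smul, Real.norm_of_nonneg (hσ0 i)]
      exact mul_le_mul_of_nonneg_left (hv i) (hσ0 i)
  set S := ∑' i, σ i • v i
  have hA := (summable_mul_sq_of_le hσ.summable hσ0 (fun i => norm_nonneg (v i)) hv).hasSum
  have hshift : HasSum (fun i => σ i * ‖v i + -S‖ ^ 2) (∑' i, σ i * ‖v i‖ ^ 2 - ‖S‖ ^ 2) := by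
    convert (hA.add (((innerSL ℝ S).hasSum hS.hasSum).mul_left (-2))).add
      (hσ.mul_right (‖S‖ ^ 2)) using 1
    · funext i
      rw [innerSL_apply_apply, real_inner_smul_right, ← sub_eq_add_neg, norm_sub_sq_real,
        real_inner_comm]
      ring
    · rw [innerSL_apply_apply, real_inner_self_eq_norm_sq]
      ring
  have hS0 : ‖S‖ ^ 2 ≤ 0 := by linarith [(hmin (-S)).trans_eq hshift.tsum_eq]
  rw [← norm_le_zero_iff.1 (by nlinarith [norm_nonneg S])]
  exact hS.hasSum

section WeightedDistance

variable {F : Type*} [NormedAddCommGroup F] {S : ℕ → Set F} {a : ℕ → F} {M : ℝ}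

noncomputable def weightedDistSq (S : ℕ → Set F) (a : ℕ → F) (x : F) : ℝ :=
  ∑' i, 1 / 2 ^ (i + 1) * infDist (x + a i) (S i) ^ 2

lemma infDist_add_le {s : Set F} {x b : F} (h0 : (0 : F) ∈ s) (hb : ‖b‖ ≤ M) :
    infDist (x + b) s ≤ ‖x‖ + M :=
  calc infDist (x + b) s ≤ dist (x + b) 0 := infDist_le_dist_of_mem h0
    _ ≤ ‖x‖ + M := by
      rw [dist_zero_right]
      exact (norm_add_le x b).trans (by linarith)

lemma summable_weightedDistSq (h0 : ∀ i, (0 : F) ∈ S i) (hM : ∀ i, ‖a i‖ ≤ M) (x : F) :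
    Summable fun i => 1 / 2 ^ (i + 1) * infDist (x + a i) (S i) ^ 2 :=
  summable_mul_sq_of_le hasSum_one_div_two_pow_succ.summable (fun _ => by positivity)
    (fun _ => infDist_nonneg) fun i => infDist_add_le (h0 i) (hM i)

lemma weightedDistSq_nonneg (x : F) : 0 ≤ weightedDistSq S a x :=
  tsum_nonneg fun _ => by positivity

lemma weightedDistSq_pos (hS : ∀ i, IsClosed (S i)) (h0 : ∀ i, (0 : F) ∈ S i)
    (hM : ∀ i, ‖a i‖ ≤ M) {x : F} (hx : ∃ i, x + a i ∉ S i) : 0 < weightedDistSq S a x := by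
  obtain ⟨i, hi⟩ := hx
  have hd := ((hS i).notMem_iff_infDist_pos ⟨0, h0 i⟩).1 hi
  exact (summable_weightedDistSq h0 hM x).tsum_pos (fun _ => by positivity) i (by positivity)

lemma continuous_weightedDistSq (h0 : ∀ i, (0 : F) ∈ S i) (hM : ∀ i, ‖a i‖ ≤ M) :
    Continuous (weightedDistSq S a) := by
  refine continuous_iff_continuousAt.2 fun x =>
    ContinuousOn.continuousAt ?_ (closedBall_mem_nhds x one_pos)
  refine continuousOn_tsum (fun i => Continuous.continuousOn ?_)
    (hasSum_one_div_two_pow_succ.summable.mul_right ((‖x‖ + 1 + M) ^ 2)) fun i y hy => ?_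
  · exact continuous_const.mul (((continuous_infDist_pt _).comp (continuous_add_const _)).pow 2)
  · have hd : infDist (y + a i) (S i) ≤ ‖x‖ + 1 + M :=
      (infDist_add_le (h0 i) (hM i)).trans (by linarith [norm_le_of_mem_closedBall hy])
    rw [Real.norm_of_nonneg (by positivity)]
    exact mul_le_mul_of_nonneg_left (pow_le_pow_left₀ infDist_nonneg hd 2) (by positivity)

lemma weightedDistSq_zero_le (h0 : ∀ i, (0 : F) ∈ S i) (hM : ∀ i, ‖a i‖ ≤ M) (x : F) :
    weightedDistSq S 0 x / 2 - M ^ 2 ≤ weightedDistSq S a x := by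
  have hlow := ((summable_weightedDistSq (a := 0) h0 (M := 0) (by simp) x).hasSum.div_const 2).sub
    (hasSum_one_div_two_pow_succ.mul_right (M ^ 2))
  rw [one_mul] at hlow
  refine hasSum_le (fun i => ?_) hlow (summable_weightedDistSq h0 hM x).hasSum
  have hd : infDist (x + (0 : ℕ → F) i) (S i) ≤ infDist (x + a i) (S i) + M := by
    refine (infDist_le_infDist_add_dist (y := x + a i)).trans ?_
    rw [Pi.zero_apply, add_zero, dist_self_add_right]
    linarith [hM i]
  have hd0 : 0 ≤ infDist (x + (0 : ℕ → F) i) (S i) := infDist_nonneg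
  have hcore : infDist (x + (0 : ℕ → F) i) (S i) ^ 2 / 2 - M ^ 2 ≤ infDist (x + a i) (S i) ^ 2 := by
    nlinarith [pow_le_pow_left₀ hd0 hd 2, sq_nonneg (infDist (x + a i) (S i) - M)]
  have := mul_le_mul_of_nonneg_left hcore (by positivity : (0 : ℝ) ≤ 1 / 2 ^ (i + 1))
  linarith

end WeightedDistance

section Cones

variable {T : ℕ → Set E} {a : ℕ → E} {M : ℝ}

lemma weightedDistSq_zero_smul (hcone : ∀ i, IsConeSet (T i)) {t : ℝ} (ht : 0 < t) (x : E) :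
    weightedDistSq T 0 (t • x) = t ^ 2 * weightedDistSq T 0 x := by
  rw [weightedDistSq, weightedDistSq, ← tsum_mul_left]
  refine tsum_congr fun i => ?_
  rw [Pi.zero_apply, add_zero, add_zero, infDist_smul_of_isConeSet (hcone i) ht]
  ring

/-- By homogeneity it suffices to bound the function below on the unit sphere, where it is
continuous and positive. -/
lemma exists_pos_mul_sq_le_weightedDistSq [FiniteDimensional ℝ E] (hT : ∀ i, IsClosed (T i))
    (hcone : ∀ i, IsConeSet (T i)) (h0 : ∀ i, (0 : E) ∈ T i) (hT0 : ⋂ i, T i ⊆ {0}) :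
    ∃ c > 0, ∀ x, c * ‖x‖ ^ 2 ≤ weightedDistSq T 0 x := by
  rcases subsingleton_or_nontrivial E with hE | hE
  · exact ⟨1, one_pos, fun x => by simpa [Subsingleton.elim x 0] using weightedDistSq_nonneg 0⟩
  obtain ⟨θ, hθ, hmin⟩ := (isCompact_sphere (0 : E) 1).exists_isMinOn
    (NormedSpace.sphere_nonempty.2 zero_le_one)
    (continuous_weightedDistSq (a := 0) h0 (M := 0) (by simp)).continuousOn
  have hθT : ∃ i, θ + (0 : ℕ → E) i ∉ T i := by
    by_contra! h
    have hθ0 := hT0 (Set.mem_iInter.2 fun i => by simpa using h i)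
    simp_all
  refine ⟨_, weightedDistSq_pos hT h0 (M := 0) (by simp) hθT, fun x => ?_⟩
  rcases eq_or_ne x 0 with rfl | hx
  · simpa using weightedDistSq_nonneg 0
  have hx0 : 0 < ‖x‖ := norm_pos_iff.2 hx
  have hxθ : ‖x‖⁻¹ • x ∈ sphere (0 : E) 1 := by
    rw [mem_sphere_zero_iff_norm, norm_smul, norm_inv, norm_norm, inv_mul_cancel₀ hx0.ne']
  calc weightedDistSq T 0 θ * ‖x‖ ^ 2 ≤ weightedDistSq T 0 (‖x‖⁻¹ • x) * ‖x‖ ^ 2 :=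
        mul_le_mul_of_nonneg_right (hmin hxθ) (sq_nonneg _)
    _ = weightedDistSq T 0 x := by
        rw [mul_comm, ← weightedDistSq_zero_smul hcone hx0, smul_inv_smul₀ hx0.ne']

lemma tendsto_weightedDistSq_cocompact [FiniteDimensional ℝ E] (hT : ∀ i, IsClosed (T i))
    (hcone : ∀ i, IsConeSet (T i)) (h0 : ∀ i, (0 : E) ∈ T i) (hT0 : ⋂ i, T i ⊆ {0})
    (hM : ∀ i, ‖a i‖ ≤ M) : Tendsto (weightedDistSq T a) (cocompact E) atTop := by
  obtain ⟨c, hc, hcx⟩ := exists_pos_mul_sq_le_weightedDistSq hT hcone h0 hT0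
  have : ProperSpace E := FiniteDimensional.proper ℝ E
  have hquad : Tendsto (fun x : E => c / 2 * ‖x‖ ^ 2 - M ^ 2) (cocompact E) atTop :=
    tendsto_atTop_add_const_right _ _ <| Tendsto.const_mul_atTop (by positivity) <|
      (tendsto_pow_atTop two_ne_zero).comp tendsto_norm_cocompact_atTop
  refine tendsto_atTop_mono (fun x => ?_) hquad
  linarith [hcx x, weightedDistSq_zero_le h0 hM x]

theorem exists_isProximalNormal_of_iInter_translate_eq_empty [FiniteDimensional ℝ E]
    (hT : ∀ i, IsClosed (T i)) (hcone : ∀ i, IsConeSet (T i)) (h0 : ∀ i, (0 : E) ∈ T i)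
    (hT0 : ⋂ i, T i ⊆ {0}) (hM : ∀ i, ‖a i‖ ≤ M) (hext : ⋂ i, (T i).translate (a i) = ∅) :
    ∃ w x : ℕ → E, (∀ i, w i ∈ T i) ∧ (∀ i, IsProximalNormal (x i) (T i) (w i)) ∧
      HasSum (fun i => (1 / 2 ^ (i + 1) : ℝ) • x i) 0 ∧
      HasSum (fun i => (1 / 2 ^ (i + 1) : ℝ) * ‖x i‖ ^ 2) 1 := by
  have : ProperSpace E := FiniteDimensional.proper ℝ E
  obtain ⟨x, hx⟩ := (continuous_weightedDistSq h0 hM).exists_forall_le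
    (tendsto_weightedDistSq_cocompact hT hcone h0 hT0 hM)
  choose w hwT hwd using fun i => (hT i).exists_infDist_eq_dist ⟨0, h0 i⟩ (x + a i)
  set v := fun i => x + a i - w i
  have hv : ∀ i, ‖v i‖ = infDist (x + a i) (T i) := fun i => by rw [hwd, dist_eq_norm]
  have hFv : HasSum (fun i => (1 / 2 ^ (i + 1) : ℝ) * ‖v i‖ ^ 2) (weightedDistSq T a x) :=
    (summable_weightedDistSq h0 hM x).hasSum.congr_fun fun i => by rw [hv]
  have hpos : 0 < weightedDistSq T a x := by
    refine weightedDistSq_pos hT h0 hM (not_forall.1 fun hmem => ?_)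
    have hx : x ∈ ⋂ i, (T i).translate (a i) := Set.mem_iInter.2 hmem
    rwa [hext] at hx
  have hbound : ∀ i, ‖v i‖ ≤ ‖x‖ + M := fun i => (hv i).trans_le (infDist_add_le (h0 i) (hM i))
  have hbary : HasSum (fun i => (1 / 2 ^ (i + 1) : ℝ) • v i) 0 := by
    refine hasSum_smul_eq_zero_of_forall_le hasSum_one_div_two_pow_succ (fun _ => by positivity)
      hbound fun h => ?_
    rw [hFv.tsum_eq]
    refine (hx (x + h)).trans <| Summable.tsum_le_tsum (fun i => ?_)
      (summable_weightedDistSq h0 hM (x + h)) <|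
      summable_mul_sq_of_le hasSum_one_div_two_pow_succ.summable (fun _ => by positivity)
        (fun _ => norm_nonneg _) fun i => (norm_add_le _ _).trans (add_le_add (hbound i) le_rfl)
    refine mul_le_mul_of_nonneg_left (pow_le_pow_left₀ infDist_nonneg ?_ 2) (by positivity)
    calc infDist (x + h + a i) (T i) ≤ dist (x + h + a i) (w i) := infDist_le_dist_of_mem (hwT i)
      _ = ‖v i + h‖ := by
        rw [dist_eq_norm]
        congr 1
        simp only [v]
        abel
  set r := Real.sqrt (weightedDistSq T a x)
  have hr : 0 < r := Real.sqrt_pos.2 hpos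
  refine ⟨w, fun i => r⁻¹ • v i, hwT,
    fun i => (isProximalNormal_sub_of_infDist_eq (hwd i)).smul (inv_pos.2 hr), ?_, ?_⟩
  · simpa [smul_comm _ r⁻¹] using hbary.const_smul r⁻¹
  · have hr2 : r ^ 2 = weightedDistSq T a x := Real.sq_sqrt hpos.le
    have h := hFv.mul_left (r ^ 2)⁻¹
    rw [hr2, inv_mul_cancel₀ hpos.ne'] at h
    refine h.congr_fun fun i => ?_
    rw [norm_smul, norm_inv, Real.norm_of_nonneg hr.le, mul_pow, inv_pow, hr2]
    ring

end Cones

/-- contingent extremal principle for countable systems of closed sets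
in finite dimensions. -/
theorem contingent_extremal_principle (n : ℕ)
    (Ω : ℕ → Set (EuclideanSpace ℝ (Fin n))) (hΩ : ∀ i, IsClosed (Ω i))
    (x₀ : EuclideanSpace ℝ (Fin n)) (hx₀ : ∀ i, x₀ ∈ Ω i)
    (hext : ∃ a : ℕ → EuclideanSpace ℝ (Fin n), (∃ M : ℝ, ∀ i, ‖a i‖ ≤ M) ∧
      ⋂ i, (contingentCone x₀ (Ω i)).translate (a i) = ∅)
    (hnonover : ⋂ i, contingentCone x₀ (Ω i) = {0}) :
    ∃ x : ℕ → EuclideanSpace ℝ (Fin n),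
      (∀ i, x i ∈ limitingNormalCone (contingentCone x₀ (Ω i)) 0) ∧
      (∀ i, x i ∈ limitingNormalCone (Ω i) x₀) ∧
      HasSum (fun i => (1 / 2 ^ (i + 1) : ℝ) • x i) 0 ∧
      HasSum (fun i => (1 / 2 ^ (i + 1) : ℝ) * ‖x i‖ ^ 2) 1 := by
  obtain ⟨a, ⟨M, hM⟩, hempty⟩ := hext
  have hcone i := isConeSet_contingentCone (hx₀ i)
  obtain ⟨w, x, hw, hprox, hsum, hnorm⟩ := exists_isProximalNormal_of_iInter_translate_eq_empty
    (fun _ => isClosed_contingentCone) hcone (fun i => zero_mem_contingentCone (hx₀ i))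
    hnonover.subset hM hempty
  exact ⟨x, fun i => (hprox i).mem_limitingNormalCone_zero (hcone i) (hw i),
    fun i => (hprox i).mem_limitingNormalCone_of_mem_contingentCone (hΩ i) (hx₀ i) (hw i),
    hsum, hnorm⟩
end
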